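/- arXiv:1603.09334 — 6 statements merged into one kernel-verified Lean document; each statement's English description precedes it below -/
import Mathlib

section
/- Let p and s be two fixed distinct propositional variables. If β is a classical two-valued tautology all of whose propositional variables lie in the set {p, s}, then the formula (s ≡ p) → β is valid in the matrix 𝔐_D, i.e. (s ≡ p) → β ∈ T_D. -/
/-- Propositional formulas built from propositional variables (indexed by `ℕ`)
using →, ∼, ∨, ∧, ≡. -/
inductive PropForm : Type
  | var : ℕ → PropForm
  | neg : PropForm → PropForm
  | imp : PropForm → PropForm → PropForm
  | disj : PropForm → PropForm → PropForm
  | conj : PropForm → PropForm → PropForm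
  | equiv : PropForm → PropForm → PropForm

/-- The implication table of the matrix 𝔐_D. -/
def fimp : Fin 3 → Fin 3 → Fin 3 := ![![1, 1, 1], ![0, 1, 0], ![0, 1, 2]]
/-- The negation table of the matrix 𝔐_D. -/
def fneg : Fin 3 → Fin 3 := ![1, 0, 2]
/-- The disjunction table of the matrix 𝔐_D. -/
def fdisj : Fin 3 → Fin 3 → Fin 3 := ![![0, 1, 0], ![1, 1, 1], ![0, 1, 2]]
/-- The conjunction table of the matrix 𝔐_D. -/
def fconj : Fin 3 → Fin 3 → Fin 3 := ![![0, 0, 0], ![0, 1, 1], ![0, 1, 2]]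
/-- The equivalence table of the matrix 𝔐_D. -/
def fequiv : Fin 3 → Fin 3 → Fin 3 := ![![1, 0, 0], ![0, 1, 0], ![0, 0, 2]]

/-- Value of a propositional formula in the matrix 𝔐_D under a valuation `v`. -/
def evalD (v : ℕ → Fin 3) : PropForm → Fin 3
  | .var n => v n
  | .neg φ => fneg (evalD v φ)
  | .imp φ ψ => fimp (evalD v φ) (evalD v ψ)
  | .disj φ ψ => fdisj (evalD v φ) (evalD v ψ)
  | .conj φ ψ => fconj (evalD v φ) (evalD v ψ)
  | .equiv φ ψ => fequiv (evalD v φ) (evalD v ψ)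

/-- T_D : the set of propositional formulas valid in 𝔐_D
(every valuation gives a designated value, i.e. 1 or 2). -/
def TD : Set PropForm := {φ | ∀ v : ℕ → Fin 3, evalD v φ = 1 ∨ evalD v φ = 2}
/-- P_0(φ) : the set of propositional variables occurring in `φ`. -/
def PropForm.vars : PropForm → Set ℕ
  | .var n => {n}
  | .neg φ => φ.vars
  | .imp φ ψ => φ.vars ∪ ψ.vars
  | .disj φ ψ => φ.vars ∪ ψ.vars
  | .conj φ ψ => φ.vars ∪ ψ.vars
  | .equiv φ ψ => φ.vars ∪ ψ.vars
/-- Classical two-valued evaluation of a propositional formula. -/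
def evalC (v : ℕ → Bool) : PropForm → Bool
  | .var n => v n
  | .neg φ => !(evalC v φ)
  | .imp φ ψ => !(evalC v φ) || evalC v ψ
  | .disj φ ψ => evalC v φ || evalC v ψ
  | .conj φ ψ => evalC v φ && evalC v ψ
  | .equiv φ ψ => evalC v φ == evalC v ψ

/-- Z_2 : the set of classical two-valued tautologies. -/
def Z2 : Set PropForm := {φ | ∀ v : ℕ → Bool, evalC v φ = true}


lemma evalD_congr (v w : ℕ → Fin 3) (φ : PropForm) (h : ∀ n ∈ φ.vars, v n = w n) :
    evalD v φ = evalD w φ := by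
  induction φ with
  | var n => exact h n rfl
  | neg φ ih => simp [evalD, ih (fun n hn => h n hn)]
  | imp φ ψ ih1 ih2 =>
      simp [evalD, ih1 (fun n hn => h n (Or.inl hn)), ih2 (fun n hn => h n (Or.inr hn))]
  | disj φ ψ ih1 ih2 =>
      simp [evalD, ih1 (fun n hn => h n (Or.inl hn)), ih2 (fun n hn => h n (Or.inr hn))]
  | conj φ ψ ih1 ih2 =>
      simp [evalD, ih1 (fun n hn => h n (Or.inl hn)), ih2 (fun n hn => h n (Or.inr hn))]
  | equiv φ ψ ih1 ih2 =>
      simp [evalD, ih1 (fun n hn => h n (Or.inl hn)), ih2 (fun n hn => h n (Or.inr hn))]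

lemma evalD_two (v : ℕ → Fin 3) (φ : PropForm) (h : ∀ n ∈ φ.vars, v n = 2) :
    evalD v φ = 2 := by
  induction φ with
  | var n => exact h n rfl
  | neg φ ih => simp [evalD, ih (fun n hn => h n hn)]; rfl
  | imp φ ψ ih1 ih2 =>
      simp [evalD, ih1 (fun n hn => h n (Or.inl hn)), ih2 (fun n hn => h n (Or.inr hn))]; rfl
  | disj φ ψ ih1 ih2 =>
      simp [evalD, ih1 (fun n hn => h n (Or.inl hn)), ih2 (fun n hn => h n (Or.inr hn))]; rfl
  | conj φ ψ ih1 ih2 =>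
      simp [evalD, ih1 (fun n hn => h n (Or.inl hn)), ih2 (fun n hn => h n (Or.inr hn))]; rfl
  | equiv φ ψ ih1 ih2 =>
      simp [evalD, ih1 (fun n hn => h n (Or.inl hn)), ih2 (fun n hn => h n (Or.inr hn))]; rfl

lemma evalD_classical (v : ℕ → Fin 3) (h : ∀ n, v n = 0 ∨ v n = 1) (φ : PropForm) :
    evalD v φ = if evalC (fun n => v n = 1) φ then 1 else 0 := by
  induction φ with
  | var n =>
      rcases h n with h' | h' <;> simp [evalD, evalC, h']
  | neg φ ih =>
      by_cases hc : evalC (fun n => v n = 1) φ <;> simp [evalD, evalC, ih, hc] <;> rfl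
  | imp φ ψ ih1 ih2 =>
      by_cases h1 : evalC (fun n => v n = 1) φ <;>
        by_cases h2 : evalC (fun n => v n = 1) ψ <;>
          simp [evalD, evalC, ih1, ih2, h1, h2] <;> rfl
  | disj φ ψ ih1 ih2 =>
      by_cases h1 : evalC (fun n => v n = 1) φ <;>
        by_cases h2 : evalC (fun n => v n = 1) ψ <;>
          simp [evalD, evalC, ih1, ih2, h1, h2] <;> rfl
  | conj φ ψ ih1 ih2 =>
      by_cases h1 : evalC (fun n => v n = 1) φ <;>
        by_cases h2 : evalC (fun n => v n = 1) ψ <;>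
          simp [evalD, evalC, ih1, ih2, h1, h2] <;> rfl
  | equiv φ ψ ih1 ih2 =>
      by_cases h1 : evalC (fun n => v n = 1) φ <;>
        by_cases h2 : evalC (fun n => v n = 1) ψ <;>
          simp [evalD, evalC, ih1, ih2, h1, h2] <;> rfl

/-- if `p` and `s` are distinct propositional variables and `β` is a
classical tautology all of whose propositional variables lie in `{p, s}`, then
(s ≡ p) → β is valid in the matrix 𝔐_D. -/
theorem equiv_imp_mem_TD (p s : ℕ) (hps : p ≠ s) (β : PropForm)
    (htaut : β ∈ Z2) (hvars : β.vars ⊆ {p, s}) :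
    PropForm.imp (PropForm.equiv (.var s) (.var p)) β ∈ TD := by
  intro v
  simp only [evalD]
  have tri : ∀ x : Fin 3, x = 0 ∨ x = 1 ∨ x = 2 := by decide
  by_cases hsp : v s = v p
  · -- replace v by the constant valuation v p on vars of β
    have hagree : ∀ n ∈ β.vars, v n = v p := by
      intro n hn
      rcases hvars hn with h | h
      · subst h; rfl
      · subst h; exact hsp
    have hβ : evalD v β = evalD (fun _ => v p) β :=
      evalD_congr _ _ _ (fun n hn => hagree n hn)
    rw [hsp]
    rcases tri (v p) with h | h | h
    · left
      rw [hβ]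
      have := evalD_classical (fun _ => (0 : Fin 3)) (fun _ => Or.inl rfl) β
      rw [h] at *
      rw [this, htaut]
      rfl
    · left
      rw [hβ]
      have := evalD_classical (fun _ => (1 : Fin 3)) (fun _ => Or.inr rfl) β
      rw [h] at *
      rw [this, htaut]
      rfl
    · right
      rw [hβ, h]
      have := evalD_two (fun _ => (2 : Fin 3)) β (fun _ _ => rfl)
      rw [this]
      rfl
  · left
    have : fequiv (v s) (v p) = 0 := by
      rcases tri (v s) with h1 | h1 | h1 <;> rcases tri (v p) with h2 | h2 | h2 <;>
        rw [h1, h2] <;> first | rfl | (exfalso; exact hsp (h1.trans h2.symm))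
    rw [this]
    rcases tri (evalD v β) with h | h | h <;> rw [h] <;> rfl
end

section
/- The system ⟨R_{0*}, T_D⟩ is axiomatizable: there exists a finite set X of propositional formulas such that Cn_0(R_{0*}, X) = T_D, where R_{0*} = {r_0^0, r_*^0}. -/
/-- h^e : the endomorphism of the set of propositional formulas induced by a
substitution `e` of formulas for propositional variables. -/
def substP (e : ℕ → PropForm) : PropForm → PropForm
  | .var n => e n
  | .neg φ => .neg (substP e φ)
  | .imp φ ψ => .imp (substP e φ) (substP e ψ)
  | .disj φ ψ => .disj (substP e φ) (substP e ψ)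
  | .conj φ ψ => .conj (substP e φ) (substP e ψ)
  | .equiv φ ψ => .equiv (substP e φ) (substP e ψ)
/-- Cn_0(R_{0*}, X) : the smallest set of propositional formulas containing `X` and
closed under modus ponens (r_0^0) and simultaneous substitution for
propositional variables (r_*^0). -/
inductive Cn0star (X : Set PropForm) : PropForm → Prop
  | base {φ : PropForm} : φ ∈ X → Cn0star X φ
  | mp {φ ψ : PropForm} : Cn0star X (.imp φ ψ) → Cn0star X φ → Cn0star X ψ
  | subst {φ : PropForm} (e : ℕ → PropForm) : Cn0star X φ → Cn0star X (substP e φ)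

namespace TDax

local infixl:70 " ⋏ " => PropForm.conj
local infixl:65 " ⋎ " => PropForm.disj
local infixr:60 " ↣ " => PropForm.imp
local infix:55 " ≋ " => PropForm.equiv
local prefix:75 "∼" => PropForm.neg

/-- variable as formula -/
abbrev pv (n : ℕ) : PropForm := .var n

/-- `A ⇒ A` surrogate: `∼A ∨ (A ∧ A)`, value 1 except 2 at the all-2 point of `A`'s vars -/
def sq (A : PropForm) : PropForm := ∼A ⋎ (A ⋏ A)

/-- `γ A = (A ≡ ∼A)`: value 0 except 2 at the all-2 point -/
def ga (A : PropForm) : PropForm := A ≋ ∼A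

/-- list of variables occurring in a formula (with duplicates) -/
def vl : PropForm → List ℕ
  | .var n => [n]
  | .neg A => vl A
  | .imp A B => vl A ++ vl B
  | .disj A B => vl A ++ vl B
  | .conj A B => vl A ++ vl B
  | .equiv A B => vl A ++ vl B

/-- right-associated conjunction of a list (sentinel for `[]`, never used) -/
def rconj : List PropForm → PropForm
  | [] => sq (pv 0)
  | [A] => A
  | A :: B :: l => A ⋏ rconj (B :: l)

/-- the "padding" formula `P_L = ⋀_{q∈L} (q ⇒ q)` -/
def P0 (L : List ℕ) : PropForm := rconj (L.map (fun q => sq (pv q)))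

def asg (a b c d e : Fin 3) : ℕ → Fin 3 := fun n =>
  match n with
  | 0 => a | 1 => b | 2 => c | 3 => d | _ => e

theorem eval_ext : ∀ (A : PropForm) {v w : ℕ → Fin 3},
    (∀ q ∈ vl A, v q = w q) → evalD v A = evalD w A := by
  intro A
  induction A with
  | var n => intro v w h; exact h n (by simp [vl])
  | neg A ih =>
      intro v w h
      simp only [evalD]; rw [ih (fun q hq => h q hq)]
  | imp A B ihA ihB =>
      intro v w h
      simp only [evalD]
      rw [ihA (fun q hq => h q (by simp [vl, hq])), ihB (fun q hq => h q (by simp [vl, hq]))]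
  | disj A B ihA ihB =>
      intro v w h
      simp only [evalD]
      rw [ihA (fun q hq => h q (by simp [vl, hq])), ihB (fun q hq => h q (by simp [vl, hq]))]
  | conj A B ihA ihB =>
      intro v w h
      simp only [evalD]
      rw [ihA (fun q hq => h q (by simp [vl, hq])), ihB (fun q hq => h q (by simp [vl, hq]))]
  | equiv A B ihA ihB =>
      intro v w h
      simp only [evalD]
      rw [ihA (fun q hq => h q (by simp [vl, hq])), ihB (fun q hq => h q (by simp [vl, hq]))]

theorem valid5 {A : PropForm} (hb : ∀ q ∈ vl A, q < 5)
    (h : ∀ a b c d e : Fin 3, evalD (asg a b c d e) A ≠ 0) : A ∈ TD := by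
  intro v
  have hx : evalD v A = evalD (asg (v 0) (v 1) (v 2) (v 3) (v 4)) A := by
    apply eval_ext
    intro q hq
    have := hb q hq
    interval_cases q <;> rfl
  rw [hx]
  have h3 : ∀ x : Fin 3, x ≠ 0 → x = 1 ∨ x = 2 := by decide
  exact h3 _ (h _ _ _ _ _)

theorem eval_subst (e : ℕ → PropForm) (v : ℕ → Fin 3) :
    ∀ A, evalD v (substP e A) = evalD (fun n => evalD v (e n)) A := by
  intro A
  induction A with
  | var n => rfl
  | neg A ih => simp only [substP, evalD, ih]
  | imp A B ihA ihB => simp only [substP, evalD, ihA, ihB]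
  | disj A B ihA ihB => simp only [substP, evalD, ihA, ihB]
  | conj A B ihA ihB => simp only [substP, evalD, ihA, ihB]
  | equiv A B ihA ihB => simp only [substP, evalD, ihA, ihB]

def ax01 : PropForm := ((pv 0) ↣ ((pv 1) ↣ ((pv 0) ⋏ (pv 1))))
def ax02 : PropForm := (((pv 0) ≋ (pv 1)) ↣ ((pv 0) ↣ (pv 1)))
def ax03 : PropForm := ((pv 0) ≋ (pv 0))
def ax04 : PropForm := (((pv 0) ≋ (pv 1)) ↣ ((pv 1) ≋ (pv 0)))
def ax05 : PropForm := (((pv 0) ≋ (pv 1)) ↣ (((pv 1) ≋ (pv 2)) ↣ ((pv 0) ≋ (pv 2))))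
def ax06 : PropForm := (((pv 0) ≋ (pv 1)) ↣ ((∼(pv 0)) ≋ (∼(pv 1))))
def ax07 : PropForm := (((pv 0) ≋ (pv 1)) ↣ (((pv 0) ⋏ (pv 2)) ≋ ((pv 1) ⋏ (pv 2))))
def ax08 : PropForm := (((pv 0) ≋ (pv 1)) ↣ (((pv 2) ⋏ (pv 0)) ≋ ((pv 2) ⋏ (pv 1))))
def ax09 : PropForm := (((pv 0) ≋ (pv 1)) ↣ (((pv 0) ⋎ (pv 2)) ≋ ((pv 1) ⋎ (pv 2))))
def ax10 : PropForm := (((pv 0) ≋ (pv 1)) ↣ (((pv 2) ⋎ (pv 0)) ≋ ((pv 2) ⋎ (pv 1))))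
def ax11 : PropForm := (((pv 0) ≋ (pv 1)) ↣ (((pv 0) ↣ (pv 2)) ≋ ((pv 1) ↣ (pv 2))))
def ax12 : PropForm := (((pv 0) ≋ (pv 1)) ↣ (((pv 2) ↣ (pv 0)) ≋ ((pv 2) ↣ (pv 1))))
def ax13 : PropForm := (((pv 0) ≋ (pv 1)) ↣ (((pv 0) ≋ (pv 2)) ≋ ((pv 1) ≋ (pv 2))))
def ax14 : PropForm := (((pv 0) ≋ (pv 1)) ↣ (((pv 2) ≋ (pv 0)) ≋ ((pv 2) ≋ (pv 1))))
def ax15 : PropForm := ((∼(pv 0)) ⋎ ((pv 0) ⋏ (pv 0)))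
def ax16 : PropForm := (((pv 0) ⋏ (pv 1)) ≋ ((pv 1) ⋏ (pv 0)))
def ax17 : PropForm := ((((pv 0) ⋏ (pv 1)) ⋏ (pv 2)) ≋ ((pv 0) ⋏ ((pv 1) ⋏ (pv 2))))
def ax18 : PropForm := (((pv 0) ⋏ (pv 0)) ≋ (pv 0))
def ax19 : PropForm := ((((pv 0) ⋏ (pv 1)) ⋏ (pv 2)) ≋ (((pv 0) ⋏ (pv 2)) ⋏ ((pv 1) ⋏ (pv 2))))
def ax20 : PropForm := (((∼(pv 0)) ⋏ (pv 2)) ≋ (((∼((pv 0) ⋏ (pv 2))) ⋏ (pv 2)) ⋎ (((pv 0) ≋ (∼(pv 0))) ⋏ (pv 2))))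
def ax21 : PropForm := ((((pv 0) ↣ (pv 1)) ⋏ (pv 2)) ≋ ((((∼((pv 0) ⋏ (pv 2))) ⋏ (pv 2)) ⋎ (((pv 1) ⋏ (pv 2)) ⋏ ((∼(((pv 1) ≋ (∼(pv 1))) ⋏ (pv 2))) ⋏ (pv 2)))) ⋎ ((((pv 0) ≋ (∼(pv 0))) ⋏ (pv 2)) ⋏ (((pv 1) ≋ (∼(pv 1))) ⋏ (pv 2)))))
def ax22 : PropForm := ((((pv 0) ⋎ (pv 1)) ⋏ (pv 2)) ≋ (((((pv 0) ⋏ (pv 2)) ⋏ ((∼(((pv 0) ≋ (∼(pv 0))) ⋏ (pv 2))) ⋏ (pv 2))) ⋎ (((pv 1) ⋏ (pv 2)) ⋏ ((∼(((pv 1) ≋ (∼(pv 1))) ⋏ (pv 2))) ⋏ (pv 2)))) ⋎ ((((pv 0) ≋ (∼(pv 0))) ⋏ (pv 2)) ⋏ (((pv 1) ≋ (∼(pv 1))) ⋏ (pv 2)))))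
def ax23 : PropForm := ((((pv 0) ≋ (pv 1)) ⋏ (pv 2)) ≋ (((((pv 0) ⋏ (pv 2)) ≋ ((pv 1) ⋏ (pv 2))) ⋏ ((((pv 0) ≋ (∼(pv 0))) ⋏ (pv 2)) ≋ (((pv 1) ≋ (∼(pv 1))) ⋏ (pv 2)))) ⋏ (pv 2)))
def ax24 : PropForm := (((pv 0) ⋏ ((∼(pv 0)) ⋎ ((pv 0) ⋏ (pv 0)))) ≋ (pv 0))
def ax25 : PropForm := (((pv 0) ⋎ ((∼((∼(pv 0)) ⋎ ((pv 0) ⋏ (pv 0)))) ⋏ ((∼(pv 0)) ⋎ ((pv 0) ⋏ (pv 0))))) ≋ (pv 0))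
def ax26 : PropForm := (((∼(∼(pv 0))) ⋎ ((∼(pv 0)) ⋏ (∼(pv 0)))) ≋ ((∼(pv 0)) ⋎ ((pv 0) ⋏ (pv 0))))
def ax27 : PropForm := (((∼((pv 0) ⋏ (pv 1))) ⋎ (((pv 0) ⋏ (pv 1)) ⋏ ((pv 0) ⋏ (pv 1)))) ≋ (((∼(pv 0)) ⋎ ((pv 0) ⋏ (pv 0))) ⋏ ((∼(pv 1)) ⋎ ((pv 1) ⋏ (pv 1)))))
def ax28 : PropForm := (((∼((pv 0) ⋎ (pv 1))) ⋎ (((pv 0) ⋎ (pv 1)) ⋏ ((pv 0) ⋎ (pv 1)))) ≋ (((∼(pv 0)) ⋎ ((pv 0) ⋏ (pv 0))) ⋏ ((∼(pv 1)) ⋎ ((pv 1) ⋏ (pv 1)))))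
def ax29 : PropForm := (((∼((pv 0) ↣ (pv 1))) ⋎ (((pv 0) ↣ (pv 1)) ⋏ ((pv 0) ↣ (pv 1)))) ≋ (((∼(pv 0)) ⋎ ((pv 0) ⋏ (pv 0))) ⋏ ((∼(pv 1)) ⋎ ((pv 1) ⋏ (pv 1)))))
def ax30 : PropForm := (((∼((pv 0) ≋ (pv 1))) ⋎ (((pv 0) ≋ (pv 1)) ⋏ ((pv 0) ≋ (pv 1)))) ≋ (((∼(pv 0)) ⋎ ((pv 0) ⋏ (pv 0))) ⋏ ((∼(pv 1)) ⋎ ((pv 1) ⋏ (pv 1)))))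
def ax31 : PropForm := (((∼(pv 0)) ≋ (∼(∼(pv 0)))) ≋ ((pv 0) ≋ (∼(pv 0))))
def ax32 : PropForm := ((((pv 0) ⋏ (pv 1)) ≋ (∼((pv 0) ⋏ (pv 1)))) ≋ (((pv 0) ≋ (∼(pv 0))) ⋏ ((pv 1) ≋ (∼(pv 1)))))
def ax33 : PropForm := ((((pv 0) ⋎ (pv 1)) ≋ (∼((pv 0) ⋎ (pv 1)))) ≋ (((pv 0) ≋ (∼(pv 0))) ⋏ ((pv 1) ≋ (∼(pv 1)))))
def ax34 : PropForm := ((((pv 0) ↣ (pv 1)) ≋ (∼((pv 0) ↣ (pv 1)))) ≋ (((pv 0) ≋ (∼(pv 0))) ⋏ ((pv 1) ≋ (∼(pv 1)))))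
def ax35 : PropForm := ((((pv 0) ≋ (pv 1)) ≋ (∼((pv 0) ≋ (pv 1)))) ≋ (((pv 0) ≋ (∼(pv 0))) ⋏ ((pv 1) ≋ (∼(pv 1)))))
def ax36 : PropForm := (((pv 0) ≋ (∼(pv 0))) ≋ ((∼((∼(pv 0)) ⋎ ((pv 0) ⋏ (pv 0)))) ⋏ ((∼(pv 0)) ⋎ ((pv 0) ⋏ (pv 0)))))
def ax37 : PropForm := ((((pv 0) ≋ (∼(pv 0))) ⋏ ((∼(pv 2)) ⋏ (pv 2))) ≋ ((∼(((∼(pv 0)) ⋎ ((pv 0) ⋏ (pv 0))) ⋏ (pv 2))) ⋏ (((∼(pv 0)) ⋎ ((pv 0) ⋏ (pv 0))) ⋏ (pv 2))))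
def ax38 : PropForm := ((((pv 0) ⋏ (pv 2)) ⋎ (((pv 0) ≋ (∼(pv 0))) ⋏ (pv 2))) ≋ ((pv 0) ⋏ (pv 2)))
def ax40 : PropForm := (((pv 0) ⋏ ((∼(pv 0)) ⋏ (pv 0))) ≋ ((∼(pv 0)) ⋏ (pv 0)))
def ax41 : PropForm := ((((∼(pv 0)) ⋏ (pv 0)) ⋏ (pv 0)) ≋ ((∼(pv 0)) ⋏ (pv 0)))
def ax42 : PropForm := ((((∼(pv 0)) ⋏ (pv 0)) ⋏ ((∼(pv 0)) ⋏ (pv 0))) ≋ ((∼(pv 0)) ⋏ (pv 0)))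
def ax43 : PropForm := (((pv 0) ⋎ (pv 0)) ≋ (pv 0))
def ax44 : PropForm := (((pv 0) ⋎ ((∼(pv 0)) ⋏ (pv 0))) ≋ (pv 0))
def ax45 : PropForm := ((((∼(pv 0)) ⋏ (pv 0)) ⋎ (pv 0)) ≋ (pv 0))
def ax46 : PropForm := ((((∼(pv 0)) ⋏ (pv 0)) ⋎ ((∼(pv 0)) ⋏ (pv 0))) ≋ ((∼(pv 0)) ⋏ (pv 0)))
def ax47 : PropForm := (((∼((∼(pv 0)) ⋏ (pv 0))) ⋏ (pv 0)) ≋ (pv 0))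
def ax48 : PropForm := ((((pv 0) ≋ (pv 0)) ⋏ (pv 0)) ≋ (pv 0))
def ax49 : PropForm := ((((pv 0) ≋ ((∼(pv 0)) ⋏ (pv 0))) ⋏ (pv 0)) ≋ ((∼(pv 0)) ⋏ (pv 0)))
def ax50 : PropForm := (((((∼(pv 0)) ⋏ (pv 0)) ≋ (pv 0)) ⋏ (pv 0)) ≋ ((∼(pv 0)) ⋏ (pv 0)))
def ax51 : PropForm := (((((∼(pv 0)) ⋏ (pv 0)) ≋ ((∼(pv 0)) ⋏ (pv 0))) ⋏ (pv 0)) ≋ (pv 0))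

/-- Boolean terms (skeletons) for the classical reasoning engine -/
inductive BT : Type
  | atom : ℕ → BT
  | top : BT
  | bot : BT
  | band : BT → BT → BT
  | bor : BT → BT → BT
  | bnot : BT → BT
  | biff : BT → BT → BT

/-- interpretation of a Boolean skeleton into formulas, with padding `pad`
and atom interpretation `σ` -/
def interp (pad : PropForm) (σ : ℕ → PropForm) : BT → PropForm
  | .atom k => σ k
  | .top => pad
  | .bot => (∼pad) ⋏ pad
  | .band s t => interp pad σ s ⋏ interp pad σ t
  | .bor s t => interp pad σ s ⋎ interp pad σ t
  | .bnot s => (∼(interp pad σ s)) ⋏ pad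
  | .biff s t => (interp pad σ s ≋ interp pad σ t) ⋏ pad

/-- conjunction of `(v i ⇒ v i)` over the five schema slots -/
def Wp (v : ℕ → PropForm) : PropForm :=
  sq (v 0) ⋏ (sq (v 1) ⋏ (sq (v 2) ⋏ (sq (v 3) ⋏ sq (v 4))))

/-- happified interpretation: atoms padded by `Wp v` -/
def hapW (v : ℕ → PropForm) (s : BT) : PropForm :=
  interp (Wp v) (fun k => (v k) ⋏ (Wp v)) s

/-- happified identity axiom -/
def hax (l r : BT) : PropForm := (hapW pv l) ≋ (hapW pv r)

-- shannon shapes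
def bsh (u w : BT) : BT := .bor (.band u (.atom 4)) (.band w (.bnot (.atom 4)))

def haxH1 : PropForm := hax (.atom 4) (bsh .top .bot)
def haxH2 : PropForm := hax (.atom 1) (bsh (.atom 1) (.atom 1))
def haxH3 : PropForm := hax .top (bsh .top .top)
def haxH4 : PropForm := hax .bot (bsh .bot .bot)
def haxH5 : PropForm := hax (.band (bsh (.atom 0) (.atom 1)) (bsh (.atom 2) (.atom 3)))
    (bsh (.band (.atom 0) (.atom 2)) (.band (.atom 1) (.atom 3)))
def haxH6 : PropForm := hax (.bor (bsh (.atom 0) (.atom 1)) (bsh (.atom 2) (.atom 3)))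
    (bsh (.bor (.atom 0) (.atom 2)) (.bor (.atom 1) (.atom 3)))
def haxH7 : PropForm := hax (.bnot (bsh (.atom 0) (.atom 1))) (bsh (.bnot (.atom 0)) (.bnot (.atom 1)))
def haxH8 : PropForm := hax (.biff (bsh (.atom 0) (.atom 1)) (bsh (.atom 2) (.atom 3)))
    (bsh (.biff (.atom 0) (.atom 2)) (.biff (.atom 1) (.atom 3)))
def haxH9 : PropForm := hax (.band (.bor (.atom 0) (.atom 1)) .top) (.bor (.atom 0) (.atom 1))

def axList : List PropForm :=
  [ax01, ax02, ax03, ax04, ax05, ax06, ax07, ax08, ax09, ax10, ax11, ax12, ax13, ax14,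
   ax15, ax16, ax17, ax18, ax19, ax20, ax21, ax22, ax23, ax24, ax25, ax26, ax27, ax28,
   ax29, ax30, ax31, ax32, ax33, ax34, ax35, ax36, ax37, ax38, ax40, ax41, ax42, ax43,
   ax44, ax45, ax46, ax47, ax48, ax49, ax50, ax51,
   haxH1, haxH2, haxH3, haxH4, haxH5, haxH6, haxH7, haxH8, haxH9]

/-- The finite axiom set. -/
def X0 : Set PropForm := {A | A ∈ axList}

set_option maxHeartbeats 8000000 in
set_option maxRecDepth 10000 in
theorem axTD : ∀ A ∈ axList, A ∈ TD := by
  have hbulk : ∀ A ∈ axList, (∀ q ∈ vl A, q < 5) ∧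
      (∀ a b c d e : Fin 3, evalD (asg a b c d e) A ≠ 0) := by decide
  intro A hA
  exact valid5 (hbulk A hA).1 (hbulk A hA).2

theorem mp_sound : ∀ x y : Fin 3, (fimp x y = 1 ∨ fimp x y = 2) → (x = 1 ∨ x = 2) →
    (y = 1 ∨ y = 2) := by decide

theorem sound : ∀ {A : PropForm}, Cn0star X0 A → A ∈ TD := by
  intro A h
  induction h with
  | base h => exact axTD _ h
  | mp h1 h2 ih1 ih2 =>
      intro v
      exact mp_sound _ _ (ih1 v) (ih2 v)
  | subst e h ih =>
      intro v
      rw [eval_subst]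
      exact ih _


/-- derivability from the axiom set -/
def Thm (A : PropForm) : Prop := Cn0star X0 A

def e5 (A B C D E : PropForm) : ℕ → PropForm := fun n =>
  match n with
  | 0 => A | 1 => B | 2 => C | 3 => D | _ => E

theorem inst5 {F : PropForm} (h : F ∈ axList) (A B C D E : PropForm) :
    Thm (substP (e5 A B C D E) F) := Cn0star.subst _ (Cn0star.base h)

theorem mem_ax01 : ax01 ∈ axList := by simp [axList]
theorem mem_ax02 : ax02 ∈ axList := by simp [axList]
theorem mem_ax03 : ax03 ∈ axList := by simp [axList]
theorem mem_ax04 : ax04 ∈ axList := by simp [axList]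
theorem mem_ax05 : ax05 ∈ axList := by simp [axList]
theorem mem_ax06 : ax06 ∈ axList := by simp [axList]
theorem mem_ax07 : ax07 ∈ axList := by simp [axList]
theorem mem_ax08 : ax08 ∈ axList := by simp [axList]
theorem mem_ax09 : ax09 ∈ axList := by simp [axList]
theorem mem_ax10 : ax10 ∈ axList := by simp [axList]
theorem mem_ax11 : ax11 ∈ axList := by simp [axList]
theorem mem_ax12 : ax12 ∈ axList := by simp [axList]
theorem mem_ax13 : ax13 ∈ axList := by simp [axList]
theorem mem_ax14 : ax14 ∈ axList := by simp [axList]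
theorem mem_ax15 : ax15 ∈ axList := by simp [axList]
theorem mem_ax16 : ax16 ∈ axList := by simp [axList]
theorem mem_ax17 : ax17 ∈ axList := by simp [axList]
theorem mem_ax18 : ax18 ∈ axList := by simp [axList]
theorem mem_ax19 : ax19 ∈ axList := by simp [axList]
theorem mem_ax20 : ax20 ∈ axList := by simp [axList]
theorem mem_ax21 : ax21 ∈ axList := by simp [axList]
theorem mem_ax22 : ax22 ∈ axList := by simp [axList]
theorem mem_ax23 : ax23 ∈ axList := by simp [axList]
theorem mem_ax24 : ax24 ∈ axList := by simp [axList]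
theorem mem_ax25 : ax25 ∈ axList := by simp [axList]
theorem mem_ax26 : ax26 ∈ axList := by simp [axList]
theorem mem_ax27 : ax27 ∈ axList := by simp [axList]
theorem mem_ax28 : ax28 ∈ axList := by simp [axList]
theorem mem_ax29 : ax29 ∈ axList := by simp [axList]
theorem mem_ax30 : ax30 ∈ axList := by simp [axList]
theorem mem_ax31 : ax31 ∈ axList := by simp [axList]
theorem mem_ax32 : ax32 ∈ axList := by simp [axList]
theorem mem_ax33 : ax33 ∈ axList := by simp [axList]
theorem mem_ax34 : ax34 ∈ axList := by simp [axList]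
theorem mem_ax35 : ax35 ∈ axList := by simp [axList]
theorem mem_ax36 : ax36 ∈ axList := by simp [axList]
theorem mem_ax37 : ax37 ∈ axList := by simp [axList]
theorem mem_ax38 : ax38 ∈ axList := by simp [axList]
theorem mem_ax40 : ax40 ∈ axList := by simp [axList]
theorem mem_ax41 : ax41 ∈ axList := by simp [axList]
theorem mem_ax42 : ax42 ∈ axList := by simp [axList]
theorem mem_ax43 : ax43 ∈ axList := by simp [axList]
theorem mem_ax44 : ax44 ∈ axList := by simp [axList]
theorem mem_ax45 : ax45 ∈ axList := by simp [axList]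
theorem mem_ax46 : ax46 ∈ axList := by simp [axList]
theorem mem_ax47 : ax47 ∈ axList := by simp [axList]
theorem mem_ax48 : ax48 ∈ axList := by simp [axList]
theorem mem_ax49 : ax49 ∈ axList := by simp [axList]
theorem mem_ax50 : ax50 ∈ axList := by simp [axList]
theorem mem_ax51 : ax51 ∈ axList := by simp [axList]
theorem mem_haxH1 : haxH1 ∈ axList := by simp [axList]
theorem mem_haxH2 : haxH2 ∈ axList := by simp [axList]
theorem mem_haxH3 : haxH3 ∈ axList := by simp [axList]
theorem mem_haxH4 : haxH4 ∈ axList := by simp [axList]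
theorem mem_haxH5 : haxH5 ∈ axList := by simp [axList]
theorem mem_haxH6 : haxH6 ∈ axList := by simp [axList]
theorem mem_haxH7 : haxH7 ∈ axList := by simp [axList]
theorem mem_haxH8 : haxH8 ∈ axList := by simp [axList]
theorem mem_haxH9 : haxH9 ∈ axList := by simp [axList]

theorem Thm.mpp {A B : PropForm} (h1 : Thm (A ↣ B)) (h2 : Thm A) : Thm B :=
  Cn0star.mp h1 h2

section rules
variable {A B C R : PropForm}

theorem tAnd (h1 : Thm A) (h2 : Thm B) : Thm (A ⋏ B) :=
  ((inst5 mem_ax01 A B A A A).mpp h1).mpp h2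
theorem tRefl (A : PropForm) : Thm (A ≋ A) := inst5 mem_ax03 A A A A A
theorem tSym (h : Thm (A ≋ B)) : Thm (B ≋ A) := (inst5 mem_ax04 A B A A A).mpp h
theorem tTrans (h1 : Thm (A ≋ B)) (h2 : Thm (B ≋ C)) : Thm (A ≋ C) :=
  ((inst5 mem_ax05 A B C A A).mpp h1).mpp h2
theorem tMp (h1 : Thm (A ≋ B)) (h2 : Thm A) : Thm B :=
  (inst5 mem_ax02 A B A A A).mpp h1 |>.mpp h2
theorem cNeg (h : Thm (A ≋ B)) : Thm ((∼A) ≋ (∼B)) := (inst5 mem_ax06 A B A A A).mpp h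
theorem cConjL (C : PropForm) (h : Thm (A ≋ B)) : Thm ((A ⋏ C) ≋ (B ⋏ C)) :=
  (inst5 mem_ax07 A B C A A).mpp h
theorem cConjR (C : PropForm) (h : Thm (A ≋ B)) : Thm ((C ⋏ A) ≋ (C ⋏ B)) :=
  (inst5 mem_ax08 A B C A A).mpp h
theorem cDisjL (C : PropForm) (h : Thm (A ≋ B)) : Thm ((A ⋎ C) ≋ (B ⋎ C)) :=
  (inst5 mem_ax09 A B C A A).mpp h
theorem cDisjR (C : PropForm) (h : Thm (A ≋ B)) : Thm ((C ⋎ A) ≋ (C ⋎ B)) :=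
  (inst5 mem_ax10 A B C A A).mpp h
theorem cImpL (C : PropForm) (h : Thm (A ≋ B)) : Thm ((A ↣ C) ≋ (B ↣ C)) :=
  (inst5 mem_ax11 A B C A A).mpp h
theorem cImpR (C : PropForm) (h : Thm (A ≋ B)) : Thm ((C ↣ A) ≋ (C ↣ B)) :=
  (inst5 mem_ax12 A B C A A).mpp h
theorem cEqvL (C : PropForm) (h : Thm (A ≋ B)) : Thm ((A ≋ C) ≋ (B ≋ C)) :=
  (inst5 mem_ax13 A B C A A).mpp h
theorem cEqvR (C : PropForm) (h : Thm (A ≋ B)) : Thm ((C ≋ A) ≋ (C ≋ B)) :=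
  (inst5 mem_ax14 A B C A A).mpp h

theorem cConj {A B C D : PropForm} (h1 : Thm (A ≋ B)) (h2 : Thm (C ≋ D)) :
    Thm ((A ⋏ C) ≋ (B ⋏ D)) := tTrans (cConjL C h1) (cConjR B h2)
theorem cDisj {A B C D : PropForm} (h1 : Thm (A ≋ B)) (h2 : Thm (C ≋ D)) :
    Thm ((A ⋎ C) ≋ (B ⋎ D)) := tTrans (cDisjL C h1) (cDisjR B h2)
theorem cEqv {A B C D : PropForm} (h1 : Thm (A ≋ B)) (h2 : Thm (C ≋ D)) :
    Thm ((A ≋ C) ≋ (B ≋ D)) := tTrans (cEqvL C h1) (cEqvR B h2)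

theorem tSq (A : PropForm) : Thm (sq A) := inst5 mem_ax15 A A A A A
theorem eComm (A B : PropForm) : Thm ((A ⋏ B) ≋ (B ⋏ A)) := inst5 mem_ax16 A B A A A
theorem eAssoc (A B C : PropForm) : Thm (((A ⋏ B) ⋏ C) ≋ (A ⋏ (B ⋏ C))) :=
  inst5 mem_ax17 A B C A A
theorem eIdem (A : PropForm) : Thm ((A ⋏ A) ≋ A) := inst5 mem_ax18 A A A A A
theorem eSplit (A B C : PropForm) : Thm (((A ⋏ B) ⋏ C) ≋ ((A ⋏ C) ⋏ (B ⋏ C))) :=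
  inst5 mem_ax19 A B C A A
theorem eSNeg (A R : PropForm) :
    Thm (((∼A) ⋏ R) ≋ (((∼(A ⋏ R)) ⋏ R) ⋎ ((ga A) ⋏ R))) := inst5 mem_ax20 A A R A A
theorem eSImp (A B R : PropForm) :
    Thm (((A ↣ B) ⋏ R) ≋ ((((∼(A ⋏ R)) ⋏ R) ⋎ ((B ⋏ R) ⋏ ((∼((ga B) ⋏ R)) ⋏ R))) ⋎
      (((ga A) ⋏ R) ⋏ ((ga B) ⋏ R)))) := inst5 mem_ax21 A B R A A
theorem eSDisj (A B R : PropForm) :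
    Thm (((A ⋎ B) ⋏ R) ≋ ((((A ⋏ R) ⋏ ((∼((ga A) ⋏ R)) ⋏ R)) ⋎ ((B ⋏ R) ⋏ ((∼((ga B) ⋏ R)) ⋏ R))) ⋎
      (((ga A) ⋏ R) ⋏ ((ga B) ⋏ R)))) := inst5 mem_ax22 A B R A A
theorem eSEqv (A B R : PropForm) :
    Thm (((A ≋ B) ⋏ R) ≋ ((((A ⋏ R) ≋ (B ⋏ R)) ⋏ (((ga A) ⋏ R) ≋ ((ga B) ⋏ R))) ⋏ R)) :=
  inst5 mem_ax23 A B R A A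
theorem ePad (A : PropForm) : Thm ((A ⋏ sq A) ≋ A) := inst5 mem_ax24 A A A A A
theorem ePadOr (A : PropForm) : Thm ((A ⋎ ((∼(sq A)) ⋏ sq A)) ≋ A) := inst5 mem_ax25 A A A A A
theorem eSqNeg (A : PropForm) : Thm ((sq (∼A)) ≋ (sq A)) := inst5 mem_ax26 A A A A A
theorem eSqConj (A B : PropForm) : Thm ((sq (A ⋏ B)) ≋ ((sq A) ⋏ (sq B))) := inst5 mem_ax27 A B A A A
theorem eSqDisj (A B : PropForm) : Thm ((sq (A ⋎ B)) ≋ ((sq A) ⋏ (sq B))) := inst5 mem_ax28 A B A A A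
theorem eSqImp (A B : PropForm) : Thm ((sq (A ↣ B)) ≋ ((sq A) ⋏ (sq B))) := inst5 mem_ax29 A B A A A
theorem eSqEqv (A B : PropForm) : Thm ((sq (A ≋ B)) ≋ ((sq A) ⋏ (sq B))) := inst5 mem_ax30 A B A A A
theorem eGaNeg (A : PropForm) : Thm ((ga (∼A)) ≋ (ga A)) := inst5 mem_ax31 A A A A A
theorem eGaConj (A B : PropForm) : Thm ((ga (A ⋏ B)) ≋ ((ga A) ⋏ (ga B))) := inst5 mem_ax32 A B A A A
theorem eGaDisj (A B : PropForm) : Thm ((ga (A ⋎ B)) ≋ ((ga A) ⋏ (ga B))) := inst5 mem_ax33 A B A A A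
theorem eGaImp (A B : PropForm) : Thm ((ga (A ↣ B)) ≋ ((ga A) ⋏ (ga B))) := inst5 mem_ax34 A B A A A
theorem eGaEqv (A B : PropForm) : Thm ((ga (A ≋ B)) ≋ ((ga A) ⋏ (ga B))) := inst5 mem_ax35 A B A A A
theorem eGaDef (A : PropForm) : Thm ((ga A) ≋ ((∼(sq A)) ⋏ (sq A))) := inst5 mem_ax36 A A A A A
theorem eGaStep (A R : PropForm) :
    Thm (((ga A) ⋏ ((∼R) ⋏ R)) ≋ ((∼((sq A) ⋏ R)) ⋏ ((sq A) ⋏ R))) := inst5 mem_ax37 A A R A A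
theorem eAbsGa (A R : PropForm) : Thm (((A ⋏ R) ⋎ ((ga A) ⋏ R)) ≋ (A ⋏ R)) :=
  inst5 mem_ax38 A A R A A
theorem eGr1 (A : PropForm) : Thm ((A ⋏ ((∼A) ⋏ A)) ≋ ((∼A) ⋏ A)) := inst5 mem_ax40 A A A A A
theorem eGr2 (A : PropForm) : Thm ((((∼A) ⋏ A) ⋏ A) ≋ ((∼A) ⋏ A)) := inst5 mem_ax41 A A A A A
theorem eGr3 (A : PropForm) : Thm ((((∼A) ⋏ A) ⋏ ((∼A) ⋏ A)) ≋ ((∼A) ⋏ A)) := inst5 mem_ax42 A A A A A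
theorem eGr4 (A : PropForm) : Thm ((A ⋎ A) ≋ A) := inst5 mem_ax43 A A A A A
theorem eGr5 (A : PropForm) : Thm ((A ⋎ ((∼A) ⋏ A)) ≋ A) := inst5 mem_ax44 A A A A A
theorem eGr6 (A : PropForm) : Thm ((((∼A) ⋏ A) ⋎ A) ≋ A) := inst5 mem_ax45 A A A A A
theorem eGr7 (A : PropForm) : Thm ((((∼A) ⋏ A) ⋎ ((∼A) ⋏ A)) ≋ ((∼A) ⋏ A)) := inst5 mem_ax46 A A A A A
theorem eGr8 (A : PropForm) : Thm (((∼((∼A) ⋏ A)) ⋏ A) ≋ A) := inst5 mem_ax47 A A A A A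
theorem eGr9 (A : PropForm) : Thm (((A ≋ A) ⋏ A) ≋ A) := inst5 mem_ax48 A A A A A
theorem eGr10 (A : PropForm) : Thm (((A ≋ ((∼A) ⋏ A)) ⋏ A) ≋ ((∼A) ⋏ A)) := inst5 mem_ax49 A A A A A
theorem eGr11 (A : PropForm) : Thm (((((∼A) ⋏ A) ≋ A) ⋏ A) ≋ ((∼A) ⋏ A)) := inst5 mem_ax50 A A A A A
theorem eGr12 (A : PropForm) : Thm (((((∼A) ⋏ A) ≋ ((∼A) ⋏ A)) ⋏ A) ≋ A) := inst5 mem_ax51 A A A A A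

end rules


section lists

theorem vl_ne_nil : ∀ A : PropForm, vl A ≠ [] := by
  intro A
  induction A <;> simp_all [vl]

theorem eCollapse (A B : PropForm) : Thm (((A ⋏ B) ⋏ B) ≋ (A ⋏ B)) :=
  tTrans (eAssoc A B B) (cConjR A (eIdem B))

theorem eSwap (A B C : PropForm) : Thm ((A ⋏ (B ⋏ C)) ≋ (B ⋏ (A ⋏ C))) :=
  tTrans (tSym (eAssoc A B C)) (tTrans (cConjL C (eComm A B)) (eAssoc B A C))

theorem rconj_append : ∀ (l1 l2 : List PropForm), l1 ≠ [] → l2 ≠ [] →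
    Thm ((rconj (l1 ++ l2)) ≋ ((rconj l1) ⋏ (rconj l2)))
  | [], _, h, _ => absurd rfl h
  | [A], l2, _, h2 => by
      cases l2 with
      | nil => exact absurd rfl h2
      | cons B l => exact tRefl _
  | A :: B :: l, l2, h1, h2 => by
      have ih := rconj_append (B :: l) l2 (by simp) h2
      exact tTrans (cConjR A ih) (tSym (eAssoc A (rconj (B :: l)) (rconj l2)))

theorem P0_cons (q : ℕ) (l : List ℕ) (h : l ≠ []) :
    P0 (q :: l) = sq (pv q) ⋏ P0 l := by
  cases l with
  | nil => exact absurd rfl h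
  | cons b m => rfl

theorem P0_append (l1 l2 : List ℕ) (h1 : l1 ≠ []) (h2 : l2 ≠ []) :
    Thm (((P0 l1) ⋏ (P0 l2)) ≋ P0 (l1 ++ l2)) := by
  have : P0 (l1 ++ l2) = rconj ((l1.map (fun q => sq (pv q))) ++ (l2.map (fun q => sq (pv q)))) := by
    simp [P0]
  rw [this]
  exact tSym (rconj_append _ _ (by simpa using h1) (by simpa using h2))

theorem memP : ∀ (L : List ℕ) (q : ℕ), q ∈ L → Thm (((sq (pv q)) ⋏ P0 L) ≋ P0 L) := by
  intro L
  induction L with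
  | nil => intro q h; simp at h
  | cons a l ih =>
      intro q hq
      cases l with
      | nil =>
          simp at hq
          subst hq
          exact eIdem _
      | cons b m =>
          rw [P0_cons a (b :: m) (by simp)]
          rcases List.mem_cons.1 hq with rfl | hq'
          · exact tTrans (tSym (eAssoc _ _ _)) (cConjL _ (eIdem (sq (pv q))))
          · exact tTrans (eSwap _ _ _) (cConjR _ (ih q hq'))

theorem subP : ∀ (l' L : List ℕ), l' ≠ [] → (∀ q ∈ l', q ∈ L) →
    Thm (((P0 l') ⋏ P0 L) ≋ P0 L)
  | [], _, h, _ => absurd rfl h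
  | [q], L, _, hs => memP L q (hs q (by simp))
  | q :: b :: m, L, _, hs => by
      have ih := subP (b :: m) L (by simp) (fun x hx => hs x (List.mem_cons_of_mem _ hx))
      rw [P0_cons q (b :: m) (by simp)]
      exact tTrans (eAssoc _ _ _) (tTrans (cConjR _ ih) (memP L q (hs q (by simp))))

theorem peqP (l' L : List ℕ) (h1 : l' ≠ []) (h2 : L ≠ [])
    (hs : ∀ q ∈ l', q ∈ L) (hs' : ∀ q ∈ L, q ∈ l') : Thm ((P0 l') ≋ P0 L) :=
  tTrans (tSym (subP L l' h2 hs')) (tTrans (eComm _ _) (subP l' L h1 hs))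

theorem thmP0 : ∀ (L : List ℕ), L ≠ [] → Thm (P0 L)
  | [], h => absurd rfl h
  | [q], _ => tSq (pv q)
  | q :: b :: m, _ => by
      rw [P0_cons q (b :: m) (by simp)]
      exact tAnd (tSq (pv q)) (thmP0 (b :: m) (by simp))

/-- the pad lemma: `sq A` is provably equivalent to the padding over `vl A` -/
theorem padL : ∀ A : PropForm, Thm ((sq A) ≋ P0 (vl A)) := by
  intro A
  induction A with
  | var n => exact tRefl _
  | neg A ih => exact tTrans (eSqNeg A) ih
  | imp A B ihA ihB =>
      exact tTrans (eSqImp A B) (tTrans (cConj ihA ihB)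
        (P0_append _ _ (vl_ne_nil A) (vl_ne_nil B)))
  | disj A B ihA ihB =>
      exact tTrans (eSqDisj A B) (tTrans (cConj ihA ihB)
        (P0_append _ _ (vl_ne_nil A) (vl_ne_nil B)))
  | conj A B ihA ihB =>
      exact tTrans (eSqConj A B) (tTrans (cConj ihA ihB)
        (P0_append _ _ (vl_ne_nil A) (vl_ne_nil B)))
  | equiv A B ihA ihB =>
      exact tTrans (eSqEqv A B) (tTrans (cConj ihA ihB)
        (P0_append _ _ (vl_ne_nil A) (vl_ne_nil B)))

end lists


section engine

/-- atoms for the Boolean engine: variable `q` (designatedness) -/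
def Qf (L0 : List ℕ) (q : ℕ) : PropForm := pv q ⋏ P0 L0
/-- atoms for the Boolean engine: `γ q` (being 2) -/
def Gf (L0 : List ℕ) (q : ℕ) : PropForm := ga (pv q) ⋏ P0 L0
/-- atom interpretation: even atoms `2q` are `Qf q`, odd atoms `2q+1` are `Gf q` -/
def sg (L0 : List ℕ) (k : ℕ) : PropForm := if k % 2 = 0 then Qf L0 (k / 2) else Gf L0 (k / 2)
/-- interpretation of a Boolean skeleton -/
def ITP (L0 : List ℕ) (s : BT) : PropForm := interp (P0 L0) (sg L0) s

theorem sg_even (L0 : List ℕ) (q : ℕ) : sg L0 (2 * q) = Qf L0 q := by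
  unfold sg
  rw [if_pos (by omega)]
  congr 1
  omega

theorem sg_odd (L0 : List ℕ) (q : ℕ) : sg L0 (2 * q + 1) = Gf L0 q := by
  unfold sg
  rw [if_neg (by omega)]
  congr 1
  omega

/-- skeleton conjunction of odd atoms over a variable list -/
def ybt : List ℕ → BT
  | [] => .top
  | [q] => .atom (2 * q + 1)
  | q :: b :: m => .band (.atom (2 * q + 1)) (ybt (b :: m))

/-- the Boolean skeleton translation of a formula -/
def Tb : PropForm → BT
  | .var q => .atom (2 * q)
  | .conj A B => .band (Tb A) (Tb B)
  | .neg A => .bor (.bnot (Tb A)) (ybt (vl A))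
  | .imp A B => .bor (.bor (.bnot (Tb A)) (.band (Tb B) (.bnot (ybt (vl B)))))
      (.band (ybt (vl A)) (ybt (vl B)))
  | .disj A B => .bor (.bor (.band (Tb A) (.bnot (ybt (vl A)))) (.band (Tb B) (.bnot (ybt (vl B)))))
      (.band (ybt (vl A)) (ybt (vl B)))
  | .equiv A B => .band (.biff (Tb A) (Tb B)) (.biff (ybt (vl A)) (ybt (vl B)))

variable (L0 : List ℕ)

theorem ybt_append : ∀ (l1 l2 : List ℕ), l1 ≠ [] → l2 ≠ [] →
    Thm ((ITP L0 (ybt (l1 ++ l2))) ≋ ((ITP L0 (ybt l1)) ⋏ (ITP L0 (ybt l2))))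
  | [], _, h, _ => absurd rfl h
  | [q], l2, _, h2 => by
      cases l2 with
      | nil => exact absurd rfl h2
      | cons b l => exact tRefl _
  | q :: b :: m, l2, h1, h2 => by
      have ih := ybt_append (b :: m) l2 (by simp) h2
      exact tTrans (cConjR _ ih) (tSym (eAssoc _ _ _))

theorem topdec : ∀ A : PropForm, Thm (((ga A) ⋏ P0 L0) ≋ ITP L0 (ybt (vl A))) := by
  intro A
  induction A with
  | var n =>
      show Thm (((ga (pv n)) ⋏ P0 L0) ≋ ITP L0 (.atom (2 * n + 1)))
      show Thm (((ga (pv n)) ⋏ P0 L0) ≋ sg L0 (2 * n + 1))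
      rw [sg_odd]
      exact tRefl _
  | neg A ih => exact tTrans (cConjL _ (eGaNeg A)) ih
  | imp A B ihA ihB =>
      refine tTrans (cConjL _ (eGaImp A B)) (tTrans (eSplit _ _ _) (tTrans (cConj ihA ihB) ?_))
      exact tSym (ybt_append L0 _ _ (vl_ne_nil A) (vl_ne_nil B))
  | disj A B ihA ihB =>
      refine tTrans (cConjL _ (eGaDisj A B)) (tTrans (eSplit _ _ _) (tTrans (cConj ihA ihB) ?_))
      exact tSym (ybt_append L0 _ _ (vl_ne_nil A) (vl_ne_nil B))
  | conj A B ihA ihB =>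
      refine tTrans (cConjL _ (eGaConj A B)) (tTrans (eSplit _ _ _) (tTrans (cConj ihA ihB) ?_))
      exact tSym (ybt_append L0 _ _ (vl_ne_nil A) (vl_ne_nil B))
  | equiv A B ihA ihB =>
      refine tTrans (cConjL _ (eGaEqv A B)) (tTrans (eSplit _ _ _) (tTrans (cConj ihA ihB) ?_))
      exact tSym (ybt_append L0 _ _ (vl_ne_nil A) (vl_ne_nil B))

/-- the translation lemma: `A ∧ P` is provably equivalent to the interpretation of
its Boolean skeleton -/
theorem cl2 : ∀ A : PropForm, Thm ((A ⋏ P0 L0) ≋ ITP L0 (Tb A)) := by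
  intro A
  induction A with
  | var n =>
      show Thm (((pv n) ⋏ P0 L0) ≋ sg L0 (2 * n))
      rw [sg_even]
      exact tRefl _
  | conj A B ihA ihB => exact tTrans (eSplit A B (P0 L0)) (cConj ihA ihB)
  | neg A ih =>
      exact tTrans (eSNeg A (P0 L0)) (cDisj (cConjL _ (cNeg ih)) (topdec L0 A))
  | imp A B ihA ihB =>
      refine tTrans (eSImp A B (P0 L0)) ?_
      exact cDisj (cDisj (cConjL _ (cNeg ihA)) (cConj ihB (cConjL _ (cNeg (topdec L0 B)))))
        (cConj (topdec L0 A) (topdec L0 B))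
  | disj A B ihA ihB =>
      refine tTrans (eSDisj A B (P0 L0)) ?_
      exact cDisj (cDisj (cConj ihA (cConjL _ (cNeg (topdec L0 A))))
          (cConj ihB (cConjL _ (cNeg (topdec L0 B)))))
        (cConj (topdec L0 A) (topdec L0 B))
  | equiv A B ihA ihB =>
      refine tTrans (eSEqv A B (P0 L0)) (tTrans (eSplit _ _ _) ?_)
      exact cConj (cConjL _ (cEqv ihA ihB)) (cConjL _ (cEqv (topdec L0 A) (topdec L0 B)))

end engine


section hapmach

def batoms : BT → List ℕ
  | .atom k => [k]
  | .top => []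
  | .bot => []
  | .band s t => batoms s ++ batoms t
  | .bor s t => batoms s ++ batoms t
  | .bnot s => batoms s
  | .biff s t => batoms s ++ batoms t

def bgood (L0 : List ℕ) (s : BT) : Prop := ∀ k ∈ batoms s, k / 2 ∈ L0

theorem substP_interp (e : ℕ → PropForm) (pad : PropForm) (σ : ℕ → PropForm) :
    ∀ s : BT, substP e (interp pad σ s) =
      interp (substP e pad) (fun k => substP e (σ k)) s := by
  intro s
  induction s with
  | atom k => rfl
  | top => rfl
  | bot => rfl
  | band s t ihs iht => simp only [interp, substP, ihs, iht]
  | bor s t ihs iht => simp only [interp, substP, ihs, iht]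
  | bnot s ihs => simp only [interp, substP, ihs]
  | biff s t ihs iht => simp only [interp, substP, ihs, iht]

theorem substP_Wp (e : ℕ → PropForm) (v : ℕ → PropForm) :
    substP e (Wp v) = Wp (fun k => substP e (v k)) := rfl

theorem substP_hax (v : ℕ → PropForm) (l r : BT) :
    substP v (hax l r) = ((hapW v l) ≋ (hapW v r)) := by
  have key : ∀ s : BT, substP v (hapW pv s) = hapW v s := by
    intro s
    unfold hapW
    rw [substP_interp]
    rfl
  show PropForm.equiv (substP v (hapW pv l)) (substP v (hapW pv r)) = _
  rw [key, key]

theorem instH {l r : BT} (h : hax l r ∈ axList) (v : ℕ → PropForm) :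
    Thm ((hapW v l) ≋ (hapW v r)) := by
  have h2 := Cn0star.subst v (Cn0star.base (show hax l r ∈ X0 from h))
  rwa [substP_hax] at h2

variable (L0 : List ℕ)

theorem wThm {v : ℕ → PropForm} (hA2 : ∀ k, Thm ((sq (v k)) ≋ P0 L0)) :
    Thm ((Wp v) ≋ P0 L0) := by
  have h34 : Thm ((sq (v 3) ⋏ sq (v 4)) ≋ P0 L0) :=
    tTrans (cConj (hA2 3) (hA2 4)) (eIdem _)
  have h234 : Thm ((sq (v 2) ⋏ (sq (v 3) ⋏ sq (v 4))) ≋ P0 L0) :=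
    tTrans (cConjR _ h34) (tTrans (cConj (hA2 2) (tRefl _)) (eIdem _))
  have h1234 : Thm ((sq (v 1) ⋏ (sq (v 2) ⋏ (sq (v 3) ⋏ sq (v 4)))) ≋ P0 L0) :=
    tTrans (cConjR _ h234) (tTrans (cConj (hA2 1) (tRefl _)) (eIdem _))
  exact tTrans (cConjR _ h1234) (tTrans (cConj (hA2 0) (tRefl _)) (eIdem _))

theorem hapdep {v : ℕ → PropForm} (hA1 : ∀ k, Thm (((v k) ⋏ P0 L0) ≋ v k))
    (hA2 : ∀ k, Thm ((sq (v k)) ≋ P0 L0)) :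
    ∀ s : BT, Thm ((hapW v s) ≋ interp (P0 L0) v s) := by
  have hW : Thm ((Wp v) ≋ P0 L0) := wThm L0 hA2
  intro s
  induction s with
  | atom k => exact tTrans (cConjR _ hW) (hA1 k)
  | top => exact hW
  | bot => exact cConj (cNeg hW) hW
  | band s t ihs iht => exact cConj ihs iht
  | bor s t ihs iht => exact cDisj ihs iht
  | bnot s ihs => exact cConj (cNeg ihs) hW
  | biff s t ihs iht => exact cConj (cEqv ihs iht) hW

theorem applyH {l r : BT} (h : hax l r ∈ axList) {v : ℕ → PropForm}
    (hA1 : ∀ k, Thm (((v k) ⋏ P0 L0) ≋ v k)) (hA2 : ∀ k, Thm ((sq (v k)) ≋ P0 L0)) :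
    Thm ((interp (P0 L0) v l) ≋ (interp (P0 L0) v r)) :=
  tTrans (tSym (hapdep L0 hA1 hA2 l)) (tTrans (instH h v) (hapdep L0 hA1 hA2 r))

theorem e5_forall {Pred : PropForm → Prop} {a b c d e : PropForm} (ha : Pred a) (hb : Pred b)
    (hc : Pred c) (hd : Pred d) (he : Pred e) : ∀ k, Pred (e5 a b c d e k) := by
  intro k
  match k with
  | 0 => exact ha
  | 1 => exact hb
  | 2 => exact hc
  | 3 => exact hd
  | (n+4) => exact he

theorem vl_sq (A : PropForm) (q : ℕ) : q ∈ vl (sq A) ↔ q ∈ vl A := by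
  simp [sq, vl]

theorem vl_P0 (L0 : List ℕ) (h : L0 ≠ []) (q : ℕ) : q ∈ vl (P0 L0) ↔ q ∈ L0 := by
  induction L0 with
  | nil => exact absurd rfl h
  | cons a l ih =>
      cases l with
      | nil => show q ∈ vl (sq (pv a)) ↔ _; simp [vl_sq, vl]
      | cons b m =>
          rw [P0_cons a (b :: m) (by simp)]
          show q ∈ vl (sq (pv a)) ++ vl (P0 (b :: m)) ↔ _
          simp [List.mem_append, vl_sq, vl, ih (by simp)]

theorem vl_ITP_sub (hne : L0 ≠ []) : ∀ s : BT, bgood L0 s →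
    ∀ q ∈ vl (ITP L0 s), q ∈ L0 := by
  intro s
  induction s with
  | atom k =>
      intro hg q hq
      have hk : k / 2 ∈ L0 := hg k (by simp [batoms])
      revert hq
      show q ∈ vl (sg L0 k) → _
      unfold sg
      split
      · show q ∈ vl (pv (k/2)) ++ vl (P0 L0) → _
        intro hq
        rcases List.mem_append.1 hq with h | h
        · simp [vl] at h; subst h; exact hk
        · exact (vl_P0 L0 hne q).1 h
      · show q ∈ vl (ga (pv (k/2))) ++ vl (P0 L0) → _
        intro hq
        rcases List.mem_append.1 hq with h | h
        · simp [ga, vl] at h; subst h; exact hk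
        · exact (vl_P0 L0 hne q).1 h
  | top => intro _ q hq; exact (vl_P0 L0 hne q).1 hq
  | bot =>
      intro _ q hq
      rcases List.mem_append.1 hq with h | h
      · exact (vl_P0 L0 hne q).1 h
      · exact (vl_P0 L0 hne q).1 h
  | band s t ihs iht =>
      intro hg q hq
      rcases List.mem_append.1 hq with h | h
      · exact ihs (fun k hk => hg k (by simp [batoms, hk])) q h
      · exact iht (fun k hk => hg k (by simp [batoms, hk])) q h
  | bor s t ihs iht =>
      intro hg q hq
      rcases List.mem_append.1 hq with h | h
      · exact ihs (fun k hk => hg k (by simp [batoms, hk])) q h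
      · exact iht (fun k hk => hg k (by simp [batoms, hk])) q h
  | bnot s ihs =>
      intro hg q hq
      rcases List.mem_append.1 hq with h | h
      · exact ihs hg q h
      · exact (vl_P0 L0 hne q).1 h
  | biff s t ihs iht =>
      intro hg q hq
      rcases List.mem_append.1 hq with h | h
      · rcases List.mem_append.1 h with h' | h'
        · exact ihs (fun k hk => hg k (by simp [batoms, hk])) q h'
        · exact iht (fun k hk => hg k (by simp [batoms, hk])) q h'
      · exact (vl_P0 L0 hne q).1 h

theorem vl_ITP_sup (hne : L0 ≠ []) : ∀ s : BT, ∀ q ∈ L0, q ∈ vl (ITP L0 s) := by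
  intro s
  induction s with
  | atom k =>
      intro q hq
      show q ∈ vl (sg L0 k)
      unfold sg
      split
      · show q ∈ vl (pv (k/2)) ++ vl (P0 L0)
        exact List.mem_append.2 (Or.inr ((vl_P0 L0 hne q).2 hq))
      · show q ∈ vl (ga (pv (k/2))) ++ vl (P0 L0)
        exact List.mem_append.2 (Or.inr ((vl_P0 L0 hne q).2 hq))
  | top => intro q hq; exact (vl_P0 L0 hne q).2 hq
  | bot => intro q hq; exact List.mem_append.2 (Or.inr ((vl_P0 L0 hne q).2 hq))
  | band s t ihs iht => intro q hq; exact List.mem_append.2 (Or.inl (ihs q hq))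
  | bor s t ihs iht => intro q hq; exact List.mem_append.2 (Or.inl (ihs q hq))
  | bnot s ihs => intro q hq; exact List.mem_append.2 (Or.inl (ihs q hq))
  | biff s t ihs iht =>
      intro q hq
      exact List.mem_append.2 (Or.inl (List.mem_append.2 (Or.inl (ihs q hq))))

theorem vl_ITP_ne (s : BT) (hne : L0 ≠ []) : vl (ITP L0 s) ≠ [] := by
  intro hembedded
  rcases List.exists_mem_of_ne_nil L0 hne with ⟨q, hq⟩
  have := vl_ITP_sup L0 hne s q hq
  rw [hembedded] at this
  simp at this

/-- spec 2: `sq (ITP s)` is provably the padding -/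
theorem sqITP (hne : L0 ≠ []) (s : BT) (hg : bgood L0 s) :
    Thm ((sq (ITP L0 s)) ≋ P0 L0) :=
  tTrans (padL (ITP L0 s)) (peqP _ L0 (vl_ITP_ne L0 s hne) hne
    (vl_ITP_sub L0 hne s hg) (vl_ITP_sup L0 hne s))

theorem sqP0 (hne : L0 ≠ []) : Thm ((sq (P0 L0)) ≋ P0 L0) :=
  tTrans (padL (P0 L0)) (peqP _ L0 (by
      intro hemb
      rcases List.exists_mem_of_ne_nil L0 hne with ⟨q, hq⟩
      have := (vl_P0 L0 hne q).2 hq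
      rw [hemb] at this
      simp at this) hne
    (fun q hq => (vl_P0 L0 hne q).1 hq) (fun q hq => (vl_P0 L0 hne q).2 hq))

/-- spec 1 (PADI): `ITP s ∧ P ≡ ITP s` -/
theorem padITP (hne : L0 ≠ []) : ∀ s : BT, bgood L0 s →
    Thm (((ITP L0 s) ⋏ P0 L0) ≋ ITP L0 s) := by
  intro s
  induction s with
  | atom k =>
      intro _
      show Thm (((sg L0 k) ⋏ P0 L0) ≋ sg L0 k)
      unfold sg
      split
      · exact eCollapse _ _
      · exact eCollapse _ _
  | top => intro _; exact eIdem _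
  | bot => intro _; exact eCollapse _ _
  | band s t ihs iht =>
      intro hg
      refine tTrans (eSplit _ _ _) (cConj (ihs ?_) (iht ?_))
      · exact fun k hk => hg k (by simp [batoms, hk])
      · exact fun k hk => hg k (by simp [batoms, hk])
  | bor s t ihs iht =>
      intro hg
      have h1 := ihs (fun k hk => hg k (by simp [batoms, hk]))
      have h2 := iht (fun k hk => hg k (by simp [batoms, hk]))
      exact applyH L0 mem_haxH9
        (e5_forall (Pred := fun A => Thm ((A ⋏ P0 L0) ≋ A)) h1 h2 (eIdem _) (eIdem _) (eIdem _))
        (e5_forall (Pred := fun A => Thm ((sq A) ≋ P0 L0))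
          (sqITP L0 hne s (fun k hk => hg k (by simp [batoms, hk])))
          (sqITP L0 hne t (fun k hk => hg k (by simp [batoms, hk])))
          (sqP0 L0 hne) (sqP0 L0 hne) (sqP0 L0 hne))
  | bnot s ihs => intro _; exact eCollapse _ _
  | biff s t ihs iht => intro _; exact eCollapse _ _

end hapmach


section boolengine

def evalB (β : ℕ → Bool) : BT → Bool
  | .atom k => β k
  | .top => true
  | .bot => false
  | .band s t => evalB β s && evalB β t
  | .bor s t => evalB β s || evalB β t
  | .bnot s => !evalB β s
  | .biff s t => evalB β s == evalB β t

def bsubst (k : ℕ) (c : BT) : BT → BT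
  | .atom j => if j = k then c else .atom j
  | .top => .top
  | .bot => .bot
  | .band s t => .band (bsubst k c s) (bsubst k c t)
  | .bor s t => .bor (bsubst k c s) (bsubst k c t)
  | .bnot s => .bnot (bsubst k c s)
  | .biff s t => .biff (bsubst k c s) (bsubst k c t)

theorem batoms_bsubst (k : ℕ) (c : BT) (hc : batoms c = []) :
    ∀ s, ∀ j ∈ batoms (bsubst k c s), j ∈ batoms s ∧ j ≠ k := by
  intro s
  induction s with
  | atom i =>
      intro j hj
      by_cases h : i = k
      · rw [show bsubst k c (.atom i) = c from by simp [bsubst, h]] at hj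
        rw [hc] at hj
        simp at hj
      · rw [show bsubst k c (.atom i) = .atom i from by simp [bsubst, h]] at hj
        simp [batoms] at hj
        subst hj
        exact ⟨by simp [batoms], h⟩
  | top => intro j hj; simp [bsubst, batoms] at hj
  | bot => intro j hj; simp [bsubst, batoms] at hj
  | band s t ihs iht =>
      intro j hj
      rcases List.mem_append.1 hj with h | h
      · rcases ihs j h with ⟨h1, h2⟩; exact ⟨List.mem_append.2 (Or.inl h1), h2⟩
      · rcases iht j h with ⟨h1, h2⟩; exact ⟨List.mem_append.2 (Or.inr h1), h2⟩
  | bor s t ihs iht =>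
      intro j hj
      rcases List.mem_append.1 hj with h | h
      · rcases ihs j h with ⟨h1, h2⟩; exact ⟨List.mem_append.2 (Or.inl h1), h2⟩
      · rcases iht j h with ⟨h1, h2⟩; exact ⟨List.mem_append.2 (Or.inr h1), h2⟩
  | bnot s ihs => exact ihs
  | biff s t ihs iht =>
      intro j hj
      rcases List.mem_append.1 hj with h | h
      · rcases ihs j h with ⟨h1, h2⟩; exact ⟨List.mem_append.2 (Or.inl h1), h2⟩
      · rcases iht j h with ⟨h1, h2⟩; exact ⟨List.mem_append.2 (Or.inr h1), h2⟩

theorem evalB_bsubst (β : ℕ → Bool) (k : ℕ) (c : BT) :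
    ∀ s, evalB β (bsubst k c s) = evalB (fun j => if j = k then evalB β c else β j) s := by
  intro s
  induction s with
  | atom i =>
      by_cases h : i = k
      · simp [bsubst, evalB, h]
      · simp [bsubst, evalB, h]
  | top => rfl
  | bot => rfl
  | band s t ihs iht => simp [bsubst, evalB, ihs, iht]
  | bor s t ihs iht => simp [bsubst, evalB, ihs, iht]
  | bnot s ihs => simp [bsubst, evalB, ihs]
  | biff s t ihs iht => simp [bsubst, evalB, ihs, iht]

variable (L0 : List ℕ)

/-- Shannon expansion: expanding a skeleton over atom `k` -/
theorem shan (hne : L0 ≠ []) (k : ℕ) (hk : k / 2 ∈ L0) :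
    ∀ s, bgood L0 s → Thm ((ITP L0 s) ≋
      ITP L0 (.bor (.band (bsubst k .top s) (.atom k)) (.band (bsubst k .bot s) (.bnot (.atom k))))) := by
  have hsgA1 : Thm (((sg L0 k) ⋏ P0 L0) ≋ sg L0 k) :=
    padITP L0 hne (.atom k) (fun j hj => by simp [batoms] at hj; subst hj; exact hk)
  have hsgA2 : Thm ((sq (sg L0 k)) ≋ P0 L0) :=
    sqITP L0 hne (.atom k) (fun j hj => by simp [batoms] at hj; subst hj; exact hk)
  intro s
  induction s with
  | atom j =>
      intro hg
      by_cases h : j = k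
      · subst h
        rw [show bsubst j .top (.atom j) = .top from by simp [bsubst],
            show bsubst j .bot (.atom j) = .bot from by simp [bsubst]]
        exact applyH L0 mem_haxH1
          (e5_forall (Pred := fun A => Thm ((A ⋏ P0 L0) ≋ A))
            (eIdem _) (eIdem _) (eIdem _) (eIdem _) hsgA1)
          (e5_forall (Pred := fun A => Thm ((sq A) ≋ P0 L0))
            (sqP0 L0 hne) (sqP0 L0 hne) (sqP0 L0 hne) (sqP0 L0 hne) hsgA2)
      · have hj : j / 2 ∈ L0 := hg j (by simp [batoms])
        rw [show bsubst k .top (.atom j) = .atom j from by simp [bsubst, h],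
            show bsubst k .bot (.atom j) = .atom j from by simp [bsubst, h]]
        exact applyH L0 mem_haxH2
          (e5_forall (Pred := fun A => Thm ((A ⋏ P0 L0) ≋ A))
            (eIdem _) (padITP L0 hne (.atom j) (fun i hi => by simp [batoms] at hi; subst hi; exact hj))
            (eIdem _) (eIdem _) hsgA1)
          (e5_forall (Pred := fun A => Thm ((sq A) ≋ P0 L0))
            (sqP0 L0 hne) (sqITP L0 hne (.atom j) (fun i hi => by simp [batoms] at hi; subst hi; exact hj))
            (sqP0 L0 hne) (sqP0 L0 hne) hsgA2)
  | top =>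
      intro _
      exact applyH L0 mem_haxH3
        (e5_forall (Pred := fun A => Thm ((A ⋏ P0 L0) ≋ A))
          (eIdem _) (eIdem _) (eIdem _) (eIdem _) hsgA1)
        (e5_forall (Pred := fun A => Thm ((sq A) ≋ P0 L0))
          (sqP0 L0 hne) (sqP0 L0 hne) (sqP0 L0 hne) (sqP0 L0 hne) hsgA2)
  | bot =>
      intro _
      exact applyH L0 mem_haxH4
        (e5_forall (Pred := fun A => Thm ((A ⋏ P0 L0) ≋ A))
          (eIdem _) (eIdem _) (eIdem _) (eIdem _) hsgA1)
        (e5_forall (Pred := fun A => Thm ((sq A) ≋ P0 L0))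
          (sqP0 L0 hne) (sqP0 L0 hne) (sqP0 L0 hne) (sqP0 L0 hne) hsgA2)
  | band s t ihs iht =>
      intro hg
      have hgs : bgood L0 s := fun j hj => hg j (by simp [batoms, hj])
      have hgt : bgood L0 t := fun j hj => hg j (by simp [batoms, hj])
      have spec1 := fun (c : BT) (hc : batoms c = []) (u : BT) (hu : bgood L0 u) =>
        padITP L0 hne (bsubst k c u) (fun j hj => hu j (batoms_bsubst k c hc u j hj).1)
      have spec2 := fun (c : BT) (hc : batoms c = []) (u : BT) (hu : bgood L0 u) =>
        sqITP L0 hne (bsubst k c u) (fun j hj => hu j (batoms_bsubst k c hc u j hj).1)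
      refine tTrans (cConj (ihs hgs) (iht hgt)) ?_
      exact applyH L0 mem_haxH5
        (e5_forall (Pred := fun A => Thm ((A ⋏ P0 L0) ≋ A))
          (spec1 .top rfl s hgs) (spec1 .bot rfl s hgs)
          (spec1 .top rfl t hgt) (spec1 .bot rfl t hgt) hsgA1)
        (e5_forall (Pred := fun A => Thm ((sq A) ≋ P0 L0))
          (spec2 .top rfl s hgs) (spec2 .bot rfl s hgs)
          (spec2 .top rfl t hgt) (spec2 .bot rfl t hgt) hsgA2)
  | bor s t ihs iht =>
      intro hg
      have hgs : bgood L0 s := fun j hj => hg j (by simp [batoms, hj])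
      have hgt : bgood L0 t := fun j hj => hg j (by simp [batoms, hj])
      have spec1 := fun (c : BT) (hc : batoms c = []) (u : BT) (hu : bgood L0 u) =>
        padITP L0 hne (bsubst k c u) (fun j hj => hu j (batoms_bsubst k c hc u j hj).1)
      have spec2 := fun (c : BT) (hc : batoms c = []) (u : BT) (hu : bgood L0 u) =>
        sqITP L0 hne (bsubst k c u) (fun j hj => hu j (batoms_bsubst k c hc u j hj).1)
      refine tTrans (cDisj (ihs hgs) (iht hgt)) ?_
      exact applyH L0 mem_haxH6
        (e5_forall (Pred := fun A => Thm ((A ⋏ P0 L0) ≋ A))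
          (spec1 .top rfl s hgs) (spec1 .bot rfl s hgs)
          (spec1 .top rfl t hgt) (spec1 .bot rfl t hgt) hsgA1)
        (e5_forall (Pred := fun A => Thm ((sq A) ≋ P0 L0))
          (spec2 .top rfl s hgs) (spec2 .bot rfl s hgs)
          (spec2 .top rfl t hgt) (spec2 .bot rfl t hgt) hsgA2)
  | bnot s ihs =>
      intro hg
      have hgs : bgood L0 s := hg
      have spec1 := fun (c : BT) (hc : batoms c = []) =>
        padITP L0 hne (bsubst k c s) (fun j hj => hgs j (batoms_bsubst k c hc s j hj).1)
      have spec2 := fun (c : BT) (hc : batoms c = []) =>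
        sqITP L0 hne (bsubst k c s) (fun j hj => hgs j (batoms_bsubst k c hc s j hj).1)
      refine tTrans (cConj (cNeg (ihs hgs)) (tRefl (P0 L0))) ?_
      exact applyH L0 mem_haxH7
        (e5_forall (Pred := fun A => Thm ((A ⋏ P0 L0) ≋ A))
          (spec1 .top rfl) (spec1 .bot rfl) (eIdem _) (eIdem _) hsgA1)
        (e5_forall (Pred := fun A => Thm ((sq A) ≋ P0 L0))
          (spec2 .top rfl) (spec2 .bot rfl) (sqP0 L0 hne) (sqP0 L0 hne) hsgA2)
  | biff s t ihs iht =>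
      intro hg
      have hgs : bgood L0 s := fun j hj => hg j (by simp [batoms, hj])
      have hgt : bgood L0 t := fun j hj => hg j (by simp [batoms, hj])
      have spec1 := fun (c : BT) (hc : batoms c = []) (u : BT) (hu : bgood L0 u) =>
        padITP L0 hne (bsubst k c u) (fun j hj => hu j (batoms_bsubst k c hc u j hj).1)
      have spec2 := fun (c : BT) (hc : batoms c = []) (u : BT) (hu : bgood L0 u) =>
        sqITP L0 hne (bsubst k c u) (fun j hj => hu j (batoms_bsubst k c hc u j hj).1)
      refine tTrans (cConj (cEqv (ihs hgs) (iht hgt)) (tRefl (P0 L0))) ?_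
      exact applyH L0 mem_haxH8
        (e5_forall (Pred := fun A => Thm ((A ⋏ P0 L0) ≋ A))
          (spec1 .top rfl s hgs) (spec1 .bot rfl s hgs)
          (spec1 .top rfl t hgt) (spec1 .bot rfl t hgt) hsgA1)
        (e5_forall (Pred := fun A => Thm ((sq A) ≋ P0 L0))
          (spec2 .top rfl s hgs) (spec2 .bot rfl s hgs)
          (spec2 .top rfl t hgt) (spec2 .bot rfl t hgt) hsgA2)

/-- ground evaluation of atom-free skeletons -/
theorem gev : ∀ s, batoms s = [] →
    Thm ((ITP L0 s) ≋ (cond (evalB (fun _ => false) s) (P0 L0) ((∼(P0 L0)) ⋏ P0 L0))) := by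
  intro s
  induction s with
  | atom k => intro h; simp [batoms] at h
  | top => intro _; exact tRefl _
  | bot => intro _; exact tRefl _
  | band s t ihs iht =>
      intro h
      rw [show batoms (BT.band s t) = batoms s ++ batoms t from rfl, List.append_eq_nil_iff] at h
      have h1 := ihs h.1
      have h2 := iht h.2
      rw [show evalB (fun _ => false) (BT.band s t) =
        (evalB (fun _ => false) s && evalB (fun _ => false) t) from rfl]
      cases hhs : evalB (fun _ => false) s <;> cases hht : evalB (fun _ => false) t <;>
        rw [hhs] at h1 <;> rw [hht] at h2
      · exact tTrans (cConj h1 h2) (eGr3 _)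
      · exact tTrans (cConj h1 h2) (eGr2 _)
      · exact tTrans (cConj h1 h2) (eGr1 _)
      · exact tTrans (cConj h1 h2) (eIdem _)
  | bor s t ihs iht =>
      intro h
      rw [show batoms (BT.bor s t) = batoms s ++ batoms t from rfl, List.append_eq_nil_iff] at h
      have h1 := ihs h.1
      have h2 := iht h.2
      rw [show evalB (fun _ => false) (BT.bor s t) =
        (evalB (fun _ => false) s || evalB (fun _ => false) t) from rfl]
      cases hhs : evalB (fun _ => false) s <;> cases hht : evalB (fun _ => false) t <;>
        rw [hhs] at h1 <;> rw [hht] at h2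
      · exact tTrans (cDisj h1 h2) (eGr7 _)
      · exact tTrans (cDisj h1 h2) (eGr6 _)
      · exact tTrans (cDisj h1 h2) (eGr5 _)
      · exact tTrans (cDisj h1 h2) (eGr4 _)
  | bnot s ihs =>
      intro h
      have h1 := ihs h
      rw [show evalB (fun _ => false) (BT.bnot s) = (!evalB (fun _ => false) s) from rfl]
      cases hhs : evalB (fun _ => false) s <;> rw [hhs] at h1
      · exact tTrans (cConj (cNeg h1) (tRefl _)) (eGr8 _)
      · exact cConj (cNeg h1) (tRefl _)
  | biff s t ihs iht =>
      intro h
      rw [show batoms (BT.biff s t) = batoms s ++ batoms t from rfl, List.append_eq_nil_iff] at h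
      have h1 := ihs h.1
      have h2 := iht h.2
      rw [show evalB (fun _ => false) (BT.biff s t) =
        (evalB (fun _ => false) s == evalB (fun _ => false) t) from rfl]
      cases hhs : evalB (fun _ => false) s <;> cases hht : evalB (fun _ => false) t <;>
        rw [hhs] at h1 <;> rw [hht] at h2
      · exact tTrans (cConj (cEqv h1 h2) (tRefl _)) (eGr12 _)
      · exact tTrans (cConj (cEqv h1 h2) (tRefl _)) (eGr11 _)
      · exact tTrans (cConj (cEqv h1 h2) (tRefl _)) (eGr10 _)
      · exact tTrans (cConj (cEqv h1 h2) (tRefl _)) (eGr9 _)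

/-- Boolean completeness of the engine -/
theorem boolCE (hne : L0 ≠ []) : ∀ (ks : List ℕ), (∀ k ∈ ks, k / 2 ∈ L0) →
    ∀ s t, (∀ j ∈ batoms s, j ∈ ks) → (∀ j ∈ batoms t, j ∈ ks) →
    (∀ β, evalB β s = evalB β t) → Thm ((ITP L0 s) ≋ (ITP L0 t)) := by
  intro ks
  induction ks with
  | nil =>
      intro _ s t hs ht hsem
      have hs' : batoms s = [] := List.eq_nil_iff_forall_not_mem.2 (fun j hj => by simpa using hs j hj)
      have ht' : batoms t = [] := List.eq_nil_iff_forall_not_mem.2 (fun j hj => by simpa using ht j hj)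
      have h1 := gev L0 s hs'
      have h2 := gev L0 t ht'
      rw [hsem] at h1
      exact tTrans h1 (tSym h2)
  | cons k ks ih =>
      intro hks s t hs ht hsem
      have hk : k / 2 ∈ L0 := hks k (by simp)
      have hgs : bgood L0 s := fun j hj => hks j (hs j hj)
      have hgt : bgood L0 t := fun j hj => hks j (ht j hj)
      have e1 := shan L0 hne k hk s hgs
      have e2 := shan L0 hne k hk t hgt
      have hsub : ∀ (c : BT), batoms c = [] → ∀ u, (∀ j ∈ batoms u, j ∈ k :: ks) →
          ∀ j ∈ batoms (bsubst k c u), j ∈ ks := by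
        intro c hc u hu j hj
        rcases batoms_bsubst k c hc u j hj with ⟨h1, h2⟩
        rcases List.mem_cons.1 (hu j h1) with h | h
        · exact absurd h h2
        · exact h
      have hks' : ∀ k' ∈ ks, k' / 2 ∈ L0 := fun k' hk' => hks k' (List.mem_cons_of_mem _ hk')
      have i1 : Thm ((ITP L0 (bsubst k .top s)) ≋ (ITP L0 (bsubst k .top t))) := by
        apply ih hks' _ _ (hsub .top rfl s hs) (hsub .top rfl t ht)
        intro β
        rw [evalB_bsubst, evalB_bsubst]
        exact hsem _
      have i0 : Thm ((ITP L0 (bsubst k .bot s)) ≋ (ITP L0 (bsubst k .bot t))) := by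
        apply ih hks' _ _ (hsub .bot rfl s hs) (hsub .bot rfl t ht)
        intro β
        rw [evalB_bsubst, evalB_bsubst]
        exact hsem _
      exact tTrans e1 (tTrans (cDisj (cConjL _ i1) (cConjL _ i0)) (tSym e2))

end boolengine


section semantics

def b2f : Bool → Fin 3
  | false => 0
  | true => 1

def patt (v : ℕ → Fin 3) (k : ℕ) : Bool :=
  if k % 2 = 0 then (if v (k / 2) = 0 then false else true)
  else (if v (k / 2) = 2 then true else false)

theorem eval_sq_var (v : ℕ → Fin 3) (q : ℕ) :
    evalD v (sq (pv q)) = if v q = 2 then 2 else 1 := by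
  show fdisj (fneg (v q)) (fconj (v q) (v q)) = _
  exact (by decide : ∀ x : Fin 3, fdisj (fneg x) (fconj x x) = if x = 2 then 2 else 1) _

theorem evalP0 (v : ℕ → Fin 3) : ∀ L, L ≠ [] →
    evalD v (P0 L) = (if ∀ q ∈ L, v q = 2 then 2 else 1)
  | [], h => absurd rfl h
  | [q], _ => by
      show evalD v (sq (pv q)) = _
      rw [eval_sq_var]
      by_cases h : v q = 2 <;> simp [h]
  | q :: b :: m, _ => by
      rw [P0_cons q (b :: m) (by simp)]
      show fconj (evalD v (sq (pv q))) (evalD v (P0 (b :: m))) = _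
      rw [evalP0 v (b :: m) (by simp), eval_sq_var]
      by_cases hq : v q = 2 <;> by_cases hm : ∀ x ∈ b :: m, v x = 2
      · rw [if_pos hq, if_pos hm, if_pos (by
          intro x hx
          rcases List.mem_cons.1 hx with rfl | h
          · exact hq
          · exact hm x h)]
        rfl
      · rw [if_pos hq, if_neg hm, if_neg (by
          intro hall
          exact hm (fun x hx => hall x (List.mem_cons_of_mem _ hx)))]
        rfl
      · rw [if_neg hq, if_pos hm, if_neg (by
          intro hall
          exact hq (hall q (by simp)))]
        rfl
      · rw [if_neg hq, if_neg hm, if_neg (by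
          intro hall
          exact hq (hall q (by simp)))]
        rfl

theorem inv (v : ℕ → Fin 3) (hne : L0 ≠ []) (hP : evalD v (P0 L0) = 1) :
    ∀ s : BT, evalD v (ITP L0 s) = b2f (evalB (patt v) s) := by
  intro s
  induction s with
  | atom k =>
      show evalD v (sg L0 k) = b2f (patt v k)
      unfold sg patt
      by_cases h : k % 2 = 0
      · rw [if_pos h, if_pos h]
        show fconj (v (k / 2)) (evalD v (P0 L0)) = _
        rw [hP]
        exact (by decide : ∀ x : Fin 3, fconj x 1 = b2f (if x = 0 then false else true)) _
      · rw [if_neg h, if_neg h]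
        show fconj (fequiv (v (k / 2)) (fneg (v (k / 2)))) (evalD v (P0 L0)) = _
        rw [hP]
        exact (by decide :
          ∀ x : Fin 3, fconj (fequiv x (fneg x)) 1 = b2f (if x = 2 then true else false)) _
  | top => exact hP
  | bot =>
      show fconj (fneg (evalD v (P0 L0))) (evalD v (P0 L0)) = _
      rw [hP]
      rfl
  | band s t ihs iht =>
      show fconj (evalD v (ITP L0 s)) (evalD v (ITP L0 t)) = _
      rw [ihs, iht]
      exact (by decide : ∀ a b : Bool, fconj (b2f a) (b2f b) = b2f (a && b)) _ _
  | bor s t ihs iht =>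
      show fdisj (evalD v (ITP L0 s)) (evalD v (ITP L0 t)) = _
      rw [ihs, iht]
      exact (by decide : ∀ a b : Bool, fdisj (b2f a) (b2f b) = b2f (a || b)) _ _
  | bnot s ihs =>
      show fconj (fneg (evalD v (ITP L0 s))) (evalD v (P0 L0)) = _
      rw [ihs, hP]
      exact (by decide : ∀ a : Bool, fconj (fneg (b2f a)) 1 = b2f (!a)) _
  | biff s t ihs iht =>
      show fconj (fequiv (evalD v (ITP L0 s)) (evalD v (ITP L0 t))) (evalD v (P0 L0)) = _
      rw [ihs, iht, hP]
      exact (by decide : ∀ a b : Bool, fconj (fequiv (b2f a) (b2f b)) 1 = b2f (a == b)) _ _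

end semantics

section brews

def brew : BT → BT
  | .atom k => if k % 2 = 0 then .bor (.atom k) (.atom (k + 1)) else .atom k
  | .top => .top
  | .bot => .bot
  | .band s t => .band (brew s) (brew t)
  | .bor s t => .bor (brew s) (brew t)
  | .bnot s => .bnot (brew s)
  | .biff s t => .biff (brew s) (brew t)

variable (L0 : List ℕ)

theorem brew_thm : ∀ s, Thm ((ITP L0 (brew s)) ≋ ITP L0 s) := by
  intro s
  induction s with
  | atom k =>
      show Thm ((ITP L0 (if k % 2 = 0 then .bor (.atom k) (.atom (k + 1)) else .atom k)) ≋ _)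
      by_cases h : k % 2 = 0
      · rw [if_pos h]
        show Thm (((sg L0 k) ⋎ (sg L0 (k + 1))) ≋ sg L0 k)
        have e1 : sg L0 k = Qf L0 (k / 2) := by unfold sg; rw [if_pos h]
        have e2 : sg L0 (k + 1) = Gf L0 (k / 2) := by
          unfold sg
          rw [if_neg (by omega)]
          congr 1
          omega
        rw [e1, e2]
        exact eAbsGa (pv (k / 2)) (P0 L0)
      · rw [if_neg h]
        exact tRefl _
  | top => exact tRefl _
  | bot => exact tRefl _
  | band s t ihs iht => exact cConj ihs iht
  | bor s t ihs iht => exact cDisj ihs iht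
  | bnot s ihs => exact cConj (cNeg ihs) (tRefl _)
  | biff s t ihs iht => exact cConj (cEqv ihs iht) (tRefl _)

theorem evalB_brew (β : ℕ → Bool) :
    ∀ s, evalB β (brew s) = evalB (fun k => if k % 2 = 0 then (β k || β (k + 1)) else β k) s := by
  intro s
  induction s with
  | atom k =>
      show evalB β (if k % 2 = 0 then .bor (.atom k) (.atom (k + 1)) else .atom k) = _
      by_cases h : k % 2 = 0
      · rw [if_pos h]
        show (β k || β (k + 1)) = if k % 2 = 0 then (β k || β (k + 1)) else β k
        rw [if_pos h]
      · rw [if_neg h]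
        show β k = if k % 2 = 0 then (β k || β (k + 1)) else β k
        rw [if_neg h]
  | top => rfl
  | bot => rfl
  | band s t ihs iht => simp [brew, evalB, ihs, iht]
  | bor s t ihs iht => simp [brew, evalB, ihs, iht]
  | bnot s ihs => simp [brew, evalB, ihs]
  | biff s t ihs iht => simp [brew, evalB, ihs, iht]

theorem bgood_brew : ∀ s, bgood L0 s → bgood L0 (brew s) := by
  intro s
  induction s with
  | atom k =>
      intro hg j hj
      have hk : k / 2 ∈ L0 := hg k (by simp [batoms])
      revert hj
      show j ∈ batoms (if k % 2 = 0 then BT.bor (.atom k) (.atom (k + 1)) else .atom k) → _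
      by_cases h : k % 2 = 0
      · rw [if_pos h]
        intro hj
        simp [batoms] at hj
        rcases hj with rfl | rfl
        · exact hk
        · rw [show (k + 1) / 2 = k / 2 from by omega]
          exact hk
      · rw [if_neg h]
        intro hj
        simp [batoms] at hj
        subst hj
        exact hk
  | top => intro hg; exact hg
  | bot => intro hg; exact hg
  | band s t ihs iht =>
      intro hg j hj
      rcases List.mem_append.1 hj with h | h
      · exact ihs (fun i hi => hg i (List.mem_append.2 (Or.inl hi))) j h
      · exact iht (fun i hi => hg i (List.mem_append.2 (Or.inr hi))) j h
  | bor s t ihs iht =>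
      intro hg j hj
      rcases List.mem_append.1 hj with h | h
      · exact ihs (fun i hi => hg i (List.mem_append.2 (Or.inl hi))) j h
      · exact iht (fun i hi => hg i (List.mem_append.2 (Or.inr hi))) j h
  | bnot s ihs => exact ihs
  | biff s t ihs iht =>
      intro hg j hj
      rcases List.mem_append.1 hj with h | h
      · exact ihs (fun i hi => hg i (List.mem_append.2 (Or.inl hi))) j h
      · exact iht (fun i hi => hg i (List.mem_append.2 (Or.inr hi))) j h

theorem bgood_ybt : ∀ L : List ℕ, (∀ q ∈ L, q ∈ L0) → bgood L0 (ybt L)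
  | [], _ => by intro j hj; simp [ybt, batoms] at hj
  | [q], h => by
      intro j hj
      simp [ybt, batoms] at hj
      subst hj
      rw [show (2 * q + 1) / 2 = q from by omega]
      exact h q (by simp)
  | q :: b :: m, h => by
      intro j hj
      rcases List.mem_append.1 hj with h' | h'
      · simp [batoms] at h'
        subst h'
        rw [show (2 * q + 1) / 2 = q from by omega]
        exact h q (by simp)
      · exact bgood_ybt (b :: m) (fun x hx => h x (List.mem_cons_of_mem _ hx)) j h'

theorem bgood_Tb : ∀ A : PropForm, (∀ q ∈ vl A, q ∈ L0) → bgood L0 (Tb A) := by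
  intro A
  induction A with
  | var n =>
      intro h j hj
      simp [Tb, batoms] at hj
      subst hj
      rw [show 2 * n / 2 = n from by omega]
      exact h n (by simp [vl])
  | neg A ih =>
      intro h j hj
      rcases List.mem_append.1 hj with h' | h'
      · exact ih h j h'
      · exact bgood_ybt L0 (vl A) h j h'
  | conj A B ihA ihB =>
      intro h j hj
      have hA : ∀ q ∈ vl A, q ∈ L0 := fun q hq => h q (List.mem_append.2 (Or.inl hq))
      have hB : ∀ q ∈ vl B, q ∈ L0 := fun q hq => h q (List.mem_append.2 (Or.inr hq))
      rcases List.mem_append.1 hj with h' | h'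
      · exact ihA hA j h'
      · exact ihB hB j h'
  | imp A B ihA ihB =>
      intro h j hj
      have hA : ∀ q ∈ vl A, q ∈ L0 := fun q hq => h q (List.mem_append.2 (Or.inl hq))
      have hB : ∀ q ∈ vl B, q ∈ L0 := fun q hq => h q (List.mem_append.2 (Or.inr hq))
      rcases List.mem_append.1 hj with h' | h'
      · rcases List.mem_append.1 h' with h'' | h''
        · exact ihA hA j h''
        · rcases List.mem_append.1 h'' with h3 | h3
          · exact ihB hB j h3
          · exact bgood_ybt L0 (vl B) hB j h3
      · rcases List.mem_append.1 h' with h'' | h''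
        · exact bgood_ybt L0 (vl A) hA j h''
        · exact bgood_ybt L0 (vl B) hB j h''
  | disj A B ihA ihB =>
      intro h j hj
      have hA : ∀ q ∈ vl A, q ∈ L0 := fun q hq => h q (List.mem_append.2 (Or.inl hq))
      have hB : ∀ q ∈ vl B, q ∈ L0 := fun q hq => h q (List.mem_append.2 (Or.inr hq))
      rcases List.mem_append.1 hj with h' | h'
      · rcases List.mem_append.1 h' with h'' | h''
        · rcases List.mem_append.1 h'' with h3 | h3
          · exact ihA hA j h3
          · exact bgood_ybt L0 (vl A) hA j h3
        · rcases List.mem_append.1 h'' with h3 | h3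
          · exact ihB hB j h3
          · exact bgood_ybt L0 (vl B) hB j h3
      · rcases List.mem_append.1 h' with h'' | h''
        · exact bgood_ybt L0 (vl A) hA j h''
        · exact bgood_ybt L0 (vl B) hB j h''
  | equiv A B ihA ihB =>
      intro h j hj
      have hA : ∀ q ∈ vl A, q ∈ L0 := fun q hq => h q (List.mem_append.2 (Or.inl hq))
      have hB : ∀ q ∈ vl B, q ∈ L0 := fun q hq => h q (List.mem_append.2 (Or.inr hq))
      rcases List.mem_append.1 hj with h' | h'
      · rcases List.mem_append.1 h' with h'' | h''
        · exact ihA hA j h''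
        · exact ihB hB j h''
      · rcases List.mem_append.1 h' with h'' | h''
        · exact bgood_ybt L0 (vl A) hA j h''
        · exact bgood_ybt L0 (vl B) hB j h''

theorem evalB_ybt (β : ℕ → Bool) : ∀ L : List ℕ,
    evalB β (ybt L) = L.all (fun q => β (2 * q + 1))
  | [] => rfl
  | [q] => by simp [ybt, evalB]
  | q :: b :: m => by
      show (β (2 * q + 1) && evalB β (ybt (b :: m))) = _
      rw [evalB_ybt β (b :: m)]
      simp

end brews

section gammas

variable (L0 : List ℕ)

def gc (L : List ℕ) : PropForm := rconj (L.map (fun q => ga (pv q)))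

theorem gc_cons (q : ℕ) (l : List ℕ) (h : l ≠ []) :
    gc (q :: l) = (ga (pv q)) ⋏ gc l := by
  cases l with
  | nil => exact absurd rfl h
  | cons b m => rfl

theorem ybt_pad : ∀ L : List ℕ, L ≠ [] →
    Thm ((ITP L0 (ybt L)) ≋ ((gc L) ⋏ P0 L0))
  | [], h => absurd rfl h
  | [q], _ => by
      show Thm ((sg L0 (2 * q + 1)) ≋ _)
      rw [sg_odd]
      exact tRefl _
  | q :: b :: m, _ => by
      have ih := ybt_pad (b :: m) (by simp)
      rw [gc_cons q (b :: m) (by simp)]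
      show Thm (((sg L0 (2 * q + 1)) ⋏ (ITP L0 (ybt (b :: m)))) ≋ _)
      rw [sg_odd]
      exact tTrans (cConjR _ ih) (tSym (eSplit _ _ _))

theorem gc_gamma : ∀ L : List ℕ, L ≠ [] →
    Thm ((gc L) ≋ ((∼(P0 L)) ⋏ P0 L))
  | [], h => absurd rfl h
  | [q], _ => eGaDef (pv q)
  | q :: b :: m, _ => by
      have ih := gc_gamma (b :: m) (by simp)
      rw [gc_cons q (b :: m) (by simp), P0_cons q (b :: m) (by simp)]
      exact tTrans (cConjR _ ih) (eGaStep (pv q) (P0 (b :: m)))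

theorem ybt_gamma (hne : L0 ≠ []) :
    Thm ((ITP L0 (ybt L0)) ≋ ((∼(P0 L0)) ⋏ P0 L0)) :=
  tTrans (ybt_pad L0 L0 hne)
    (tTrans (cConjL _ (gc_gamma L0 hne)) (eCollapse (∼(P0 L0)) (P0 L0)))

end gammas


section final

theorem des_eqv {A B : PropForm} (v : ℕ → Fin 3)
    (h : evalD v (A ≋ B) = 1 ∨ evalD v (A ≋ B) = 2) : evalD v A = evalD v B := by
  have e : evalD v (A ≋ B) = fequiv (evalD v A) (evalD v B) := rfl
  rw [e] at h
  exact (by decide : ∀ x y : Fin 3, (fequiv x y = 1 ∨ fequiv x y = 2) → x = y) _ _ h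

theorem b2f_true {b : Bool} (h : b2f b = 1) : b = true := by
  cases b
  · exact absurd h (by decide)
  · rfl

def pairsKs : List ℕ → List ℕ
  | [] => []
  | q :: l => 2 * q :: (2 * q + 1) :: pairsKs l

theorem mem_pairsKs : ∀ (L : List ℕ) (k : ℕ), k ∈ pairsKs L ↔ k / 2 ∈ L := by
  intro L
  induction L with
  | nil => intro k; simp [pairsKs]
  | cons q l ih =>
      intro k
      show k ∈ 2 * q :: (2 * q + 1) :: pairsKs l ↔ _
      simp only [List.mem_cons, ih]
      constructor
      · rintro (rfl | rfl | h)
        · exact Or.inl (by omega)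
        · exact Or.inl (by omega)
        · exact Or.inr h
      · rintro (hq | h)
        · have : k = 2 * q ∨ k = 2 * q + 1 := by omega
          rcases this with rfl | rfl
          · exact Or.inl rfl
          · exact Or.inr (Or.inl rfl)
        · exact Or.inr (Or.inr h)

/-- the three-valued valuation associated with a boolean valuation of the doubled atoms -/
def uval (β : ℕ → Bool) : ℕ → Fin 3 := fun q =>
  if β (2 * q + 1) = true then 2 else if β (2 * q) = true then 1 else 0

theorem uval_two (β : ℕ → Bool) (q : ℕ) : (uval β q = 2) ↔ (β (2 * q + 1) = true) := by
  unfold uval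
  by_cases h1 : β (2 * q + 1) = true <;> by_cases h0 : β (2 * q) = true <;> simp [h1, h0]

theorem patt_of_brew (β : ℕ → Bool) :
    (fun k => if k % 2 = 0 then (β k || β (k + 1)) else β k) = patt (uval β) := by
  funext k
  by_cases hk : k % 2 = 0
  · rw [if_pos hk]
    unfold patt
    rw [if_pos hk]
    unfold uval
    rw [show 2 * (k / 2) = k from by omega]
    cases h1 : β (k + 1) <;> cases h0 : β k <;> simp [h1, h0]
  · rw [if_neg hk]
    unfold patt
    rw [if_neg hk]
    unfold uval
    rw [show 2 * (k / 2) + 1 = k from by omega]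
    cases h1 : β k <;> cases h0 : β (2 * (k / 2)) <;> simp [h1, h0]

/-- completeness -/
theorem complete (φ : PropForm) (hφ : φ ∈ TD) : Thm φ := by
  have hne : vl φ ≠ [] := vl_ne_nil φ
  have hgoodTb : bgood (vl φ) (Tb φ) := bgood_Tb (vl φ) φ (fun q hq => hq)
  have hgoodS : bgood (vl φ) (BT.bor (brew (Tb φ)) (ybt (vl φ))) := by
    intro j hj
    rcases List.mem_append.1 hj with h | h
    · exact bgood_brew (vl φ) (Tb φ) hgoodTb j h
    · exact bgood_ybt (vl φ) (vl φ) (fun q hq => hq) j h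
  have htb : Thm ((φ ⋏ P0 (vl φ)) ≋ ITP (vl φ) (Tb φ)) := cl2 (vl φ) φ
  have hval : ∀ v, evalD v (ITP (vl φ) (Tb φ)) = evalD v (φ ⋏ P0 (vl φ)) :=
    fun v => (des_eqv v (sound htb v)).symm
  have taut : ∀ β, evalB β (BT.bor (brew (Tb φ)) (ybt (vl φ))) = true := by
    intro β
    show (evalB β (brew (Tb φ)) || evalB β (ybt (vl φ))) = true
    by_cases hall : ∀ q ∈ vl φ, β (2 * q + 1) = true
    · have h1 : (vl φ).all (fun q => β (2 * q + 1)) = true := List.all_eq_true.2 hall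
      rw [evalB_ybt, h1, Bool.or_true]
    · push_neg at hall
      obtain ⟨q0, hq0, hq0f⟩ := hall
      have huP : evalD (uval β) (P0 (vl φ)) = 1 := by
        rw [evalP0 (uval β) (vl φ) hne, if_neg]
        intro hall2
        exact hq0f ((uval_two β q0).1 (hall2 q0 hq0))
      have hbrew : evalB β (brew (Tb φ)) = true := by
        rw [evalB_brew, patt_of_brew]
        have hinv := inv (L0 := vl φ) (uval β) hne huP (Tb φ)
        have h1 : evalD (uval β) (ITP (vl φ) (Tb φ)) = 1 := by
          rw [hval (uval β)]
          show fconj (evalD (uval β) φ) (evalD (uval β) (P0 (vl φ))) = 1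
          rw [huP]
          rcases hφ (uval β) with h | h <;> rw [h] <;> decide
        rw [h1] at hinv
        exact b2f_true hinv.symm
      rw [hbrew, Bool.true_or]
  have hce : Thm ((ITP (vl φ) (BT.bor (brew (Tb φ)) (ybt (vl φ)))) ≋ (ITP (vl φ) BT.top)) := by
    apply boolCE (vl φ) hne (pairsKs (vl φ)) ?_ _ _ ?_ ?_ ?_
    · intro k hk
      exact (mem_pairsKs _ _).1 hk
    · intro j hj
      exact (mem_pairsKs _ _).2 (hgoodS j hj)
    · intro j hj
      simp [batoms] at hj
    · intro β
      rw [taut β]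
      rfl
  have hpadφ : Thm (φ ≋ (φ ⋏ P0 (vl φ))) :=
    tTrans (tSym (ePad φ)) (cConjR φ (padL φ))
  have h2 : Thm ((ITP (vl φ) (BT.bor (brew (Tb φ)) (ybt (vl φ)))) ≋
      (φ ⋎ ((∼(P0 (vl φ))) ⋏ P0 (vl φ)))) :=
    cDisj (tTrans (brew_thm (vl φ) (Tb φ)) (tSym (tTrans hpadφ htb)))
      (ybt_gamma (vl φ) hne)
  have h3 : Thm ((φ ⋎ ((∼(P0 (vl φ))) ⋏ P0 (vl φ))) ≋ φ) :=
    tTrans (tSym (cDisjR φ (cConj (cNeg (padL φ)) (padL φ)))) (ePadOr φ)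
  have hPeqφ : Thm ((P0 (vl φ)) ≋ φ) := tTrans (tSym hce) (tTrans h2 h3)
  exact tMp hPeqφ (thmP0 (vl φ) hne)

theorem main_eq : {φ : PropForm | Cn0star X0 φ} = TD := by
  ext φ
  exact ⟨fun h => sound h, fun h => complete φ h⟩

end final

end TDax


/-- the system ⟨R_{0*}, T_D⟩ is axiomatizable: there is a finite set `X`
of propositional formulas with Cn_0(R_{0*}, X) = T_D. -/
theorem TD_axiomatizable :
    ∃ X : Set PropForm, X.Finite ∧ {φ : PropForm | Cn0star X φ} = TD :=
  ⟨TDax.X0, TDax.axList.finite_toSet, TDax.main_eq⟩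
end

section
/- Let φ, ψ be propositional formulas and suppose there exists a substitution e with h^e(φ) ∈ T_D. Then φ → ψ ∈ Cn_0(R_{0*}, T_D) if and only if for every substitution e: h^e(φ) ∈ T_D implies both h^e(ψ) ∈ T_D and P_0(h^e(φ)) ⊆ P_0(h^e(ψ)). -/
/-!
Validity in `𝔐_D` is preserved by modus ponens and substitution, so `Cn_0(R_{0*}, T_D) ⊆ T_D`.
The value `2` is absorbing: a formula takes it exactly when all its variables do. Hence if
`φ → ψ` and `φ` are valid then `P_0(φ) ⊆ P_0(ψ)`, since value `0` at a variable missing from `ψ`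
and `2` elsewhere would give `φ → ψ` the value `1 → 2 = 0`.

Conversely, a valid instance of `φ` yields a `{0, 1}`-valuation `c` with `c(φ) = 1`. Given `v`
with `v(φ) ≠ 0`, substitute for each `p` a formula `switchForm (v p) (c p)` in the variables
`0, 1` that takes the value `c p` when `w 0 ≠ 2`, the value `v p` when `w 0 = 2 ≠ w 1`, and `2`
otherwise. This instance of `φ` is valid, so the instance of `ψ` is valid, whence `v(ψ) ≠ 0`.
The variable `1` occurs in the formula substituted for `p` exactly when `v p ≠ 2`, so the
inclusion of variables turns `v(ψ) = 2` into `v(φ) = 2`; together `v(φ → ψ) ≠ 0`.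
-/

namespace PropForm

@[simp] lemma vars_var (n : ℕ) : (var n).vars = {n} := rfl
@[simp] lemma vars_neg (a : PropForm) : (neg a).vars = a.vars := rfl
@[simp] lemma vars_imp (a b : PropForm) : (imp a b).vars = a.vars ∪ b.vars := rfl
@[simp] lemma vars_disj (a b : PropForm) : (disj a b).vars = a.vars ∪ b.vars := rfl
@[simp] lemma vars_conj (a b : PropForm) : (conj a b).vars = a.vars ∪ b.vars := rfl
@[simp] lemma vars_equiv (a b : PropForm) : (equiv a b).vars = a.vars ∪ b.vars := rfl

lemma vars_nonempty (χ : PropForm) : χ.vars.Nonempty := by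
  induction χ with
  | var n => exact Set.singleton_nonempty n
  | neg a ih => exact ih
  | imp a b ih _ | disj a b ih _ | conj a b ih _ | equiv a b ih _ =>
    exact ih.mono Set.subset_union_left

lemma vars_substP (e : ℕ → PropForm) (χ : PropForm) :
    (substP e χ).vars = ⋃ n ∈ χ.vars, (e n).vars := by
  induction χ with
  | var n => simp [substP]
  | neg a ih => simpa [substP] using ih
  | imp a b iha ihb | disj a b iha ihb | conj a b iha ihb | equiv a b iha ihb =>
    simp only [substP, vars_imp, vars_disj, vars_conj, vars_equiv, iha, ihb, Set.biUnion_union]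

end PropForm

open PropForm

lemma evalD_substP (e : ℕ → PropForm) (w : ℕ → Fin 3) (χ : PropForm) :
    evalD w (substP e χ) = evalD (fun n => evalD w (e n)) χ := by
  induction χ with
  | var n => rfl
  | neg a ih => simp only [substP, evalD, ih]
  | imp a b iha ihb | disj a b iha ihb | conj a b iha ihb | equiv a b iha ihb =>
    simp only [substP, evalD, iha, ihb]

lemma evalD_eq_two_iff {w : ℕ → Fin 3} {χ : PropForm} :
    evalD w χ = 2 ↔ ∀ n ∈ χ.vars, w n = 2 := by
  have hneg : ∀ a : Fin 3, fneg a = 2 ↔ a = 2 := by decide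
  have himp : ∀ a b : Fin 3, fimp a b = 2 ↔ a = 2 ∧ b = 2 := by decide
  have hdisj : ∀ a b : Fin 3, fdisj a b = 2 ↔ a = 2 ∧ b = 2 := by decide
  have hconj : ∀ a b : Fin 3, fconj a b = 2 ↔ a = 2 ∧ b = 2 := by decide
  have hequiv : ∀ a b : Fin 3, fequiv a b = 2 ↔ a = 2 ∧ b = 2 := by decide
  induction χ with
  | var n => simp [evalD]
  | neg a ih => simp [evalD, hneg, ih]
  | imp a b iha ihb | disj a b iha ihb | conj a b iha ihb | equiv a b iha ihb =>
    simp [evalD, himp, hdisj, hconj, hequiv, iha, ihb, or_imp, forall_and]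

lemma evalD_ne_two_of_mem_vars {w : ℕ → Fin 3} {χ : PropForm} {n : ℕ} (hn : n ∈ χ.vars)
    (hw : w n ≠ 2) : evalD w χ ≠ 2 :=
  fun h => hw (evalD_eq_two_iff.1 h n hn)

lemma mem_TD_iff {φ : PropForm} : φ ∈ TD ↔ ∀ v, evalD v φ ≠ 0 := by
  have h : ∀ a : Fin 3, a = 1 ∨ a = 2 ↔ a ≠ 0 := by decide
  exact forall_congr' fun v => h _

lemma TD_mp {φ ψ : PropForm} (himp : imp φ ψ ∈ TD) (hφ : φ ∈ TD) : ψ ∈ TD := by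
  have h : ∀ a b : Fin 3, fimp a b ≠ 0 → a ≠ 0 → b ≠ 0 := by decide
  rw [mem_TD_iff] at *
  exact fun v => h _ _ (himp v) (hφ v)

lemma substP_mem_TD {φ : PropForm} (e : ℕ → PropForm) (hφ : φ ∈ TD) : substP e φ ∈ TD :=
  fun w => by rw [evalD_substP]; exact hφ _

lemma mem_TD_of_Cn0star {X : Set PropForm} (hX : X ⊆ TD) {φ : PropForm} (h : Cn0star X φ) :
    φ ∈ TD := by
  induction h with
  | base h => exact hX h
  | mp _ _ ihimp ih => exact TD_mp ihimp ih
  | subst e _ ih => exact substP_mem_TD e ih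

lemma vars_subset_of_imp_mem_TD {φ ψ : PropForm} (himp : imp φ ψ ∈ TD) (hφ : φ ∈ TD) :
    φ.vars ⊆ ψ.vars := by
  intro n hnφ
  by_contra hnψ
  let w : ℕ → Fin 3 := fun m => if m = n then 0 else 2
  have hψ : evalD w ψ = 2 :=
    evalD_eq_two_iff.2 fun m hm => if_neg fun (h : m = n) => hnψ (h ▸ hm)
  have hφ1 : evalD w φ ≠ 2 := evalD_ne_two_of_mem_vars hnφ (by simp [w])
  have h : ∀ a : Fin 3, a ≠ 0 → a ≠ 2 → fimp a 2 = 0 := by decide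
  exact mem_TD_iff.1 himp w (by simp only [evalD, hψ]; exact h _ (mem_TD_iff.1 hφ w) hφ1)

lemma exists_classical_valuation {φ : PropForm} (hex : ∃ e : ℕ → PropForm, substP e φ ∈ TD) :
    ∃ c : ℕ → Fin 3, (∀ n, c n ≠ 2) ∧ evalD c φ = 1 := by
  obtain ⟨e, he⟩ := hex
  have hzero : ∀ χ : PropForm, evalD (fun _ => 0) χ ≠ 2 := fun χ =>
    evalD_ne_two_of_mem_vars (vars_nonempty χ).some_mem (by decide)
  refine ⟨fun n => evalD (fun _ => 0) (e n), fun n => hzero _, ?_⟩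
  rw [← evalD_substP]
  have h : ∀ a : Fin 3, a ≠ 0 → a ≠ 2 → a = 1 := by decide
  exact h _ (mem_TD_iff.1 he _) (hzero _)

def selfImp (n : ℕ) : PropForm := imp (var n) (var n)

-- `selfImp n` takes the value `2` where `n` does and `1` elsewhere.
def switchForm : Fin 3 → Fin 3 → PropForm
  | 0, 0 => neg (disj (selfImp 0) (selfImp 1))
  | 0, _ => neg (conj (neg (selfImp 0)) (selfImp 1))
  | 1, 0 => conj (neg (selfImp 0)) (selfImp 1)
  | 1, _ => disj (selfImp 0) (selfImp 1)
  | 2, 0 => neg (selfImp 0)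
  | 2, _ => selfImp 0

lemma evalD_switchForm (w : ℕ → Fin 3) {a b : Fin 3} (hb : b ≠ 2) :
    evalD w (switchForm a b) = if w 0 ≠ 2 then b else if w 1 ≠ 2 then a else 2 := by
  fin_cases a <;> fin_cases b <;>
    simp only [Fin.reduceFinMk, Fin.isValue, switchForm, selfImp, evalD] <;>
    generalize w 0 = x <;> generalize w 1 = y <;> revert x y hb <;> decide

lemma one_mem_vars_switchForm_iff {a b : Fin 3} : 1 ∈ (switchForm a b).vars ↔ a ≠ 2 := by
  fin_cases a <;> fin_cases b <;> simp [switchForm, selfImp]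

section switch

variable {v c : ℕ → Fin 3}

lemma evalD_substP_switchForm (hc : ∀ n, c n ≠ 2) (w : ℕ → Fin 3) (χ : PropForm) :
    evalD w (substP (fun n => switchForm (v n) (c n)) χ) =
      if w 0 ≠ 2 then evalD c χ else if w 1 ≠ 2 then evalD v χ else 2 := by
  rw [evalD_substP]
  simp_rw [evalD_switchForm w (hc _)]
  by_cases h0 : w 0 = 2 <;> by_cases h1 : w 1 = 2 <;> simp [h0, h1, evalD_eq_two_iff]

lemma substP_switchForm_mem_TD (hc : ∀ n, c n ≠ 2) {φ : PropForm} (hcφ : evalD c φ = 1)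
    (hvφ : evalD v φ ≠ 0) : substP (fun n => switchForm (v n) (c n)) φ ∈ TD := by
  refine mem_TD_iff.2 fun w => ?_
  rw [evalD_substP_switchForm hc]
  split_ifs <;> simp [hcφ, hvφ]

lemma evalD_ne_zero_of_substP_switchForm_mem_TD (hc : ∀ n, c n ≠ 2) {ψ : PropForm}
    (hψ : substP (fun n => switchForm (v n) (c n)) ψ ∈ TD) : evalD v ψ ≠ 0 := by
  simpa [evalD_substP_switchForm hc] using mem_TD_iff.1 hψ fun n => if n = 0 then 2 else 0

lemma evalD_eq_two_of_vars_substP_switchForm_subset {φ ψ : PropForm}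
    (hvars : (substP (fun n => switchForm (v n) (c n)) φ).vars ⊆
      (substP (fun n => switchForm (v n) (c n)) ψ).vars)
    (hψ : evalD v ψ = 2) : evalD v φ = 2 := by
  refine evalD_eq_two_iff.2 fun n hn => by_contra fun hn2 => ?_
  have h1 := hvars <| by
    rw [vars_substP]; exact Set.mem_biUnion hn (one_mem_vars_switchForm_iff.2 hn2)
  rw [vars_substP] at h1
  obtain ⟨m, hm, h1m⟩ := Set.mem_iUnion₂.1 h1
  exact one_mem_vars_switchForm_iff.1 h1m (evalD_eq_two_iff.1 hψ m hm)

end switch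

lemma imp_mem_TD_of_forall_substP {φ ψ : PropForm}
    (hex : ∃ e : ℕ → PropForm, substP e φ ∈ TD)
    (h : ∀ e : ℕ → PropForm, substP e φ ∈ TD →
      substP e ψ ∈ TD ∧ (substP e φ).vars ⊆ (substP e ψ).vars) :
    imp φ ψ ∈ TD := by
  obtain ⟨c, hc, hcφ⟩ := exists_classical_valuation hex
  refine mem_TD_iff.2 fun v => ?_
  show fimp (evalD v φ) (evalD v ψ) ≠ 0
  by_cases hvφ : evalD v φ = 0
  · rw [hvφ]
    exact (by decide : ∀ b : Fin 3, fimp 0 b ≠ 0) _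
  obtain ⟨hψ, hvars⟩ := h _ (substP_switchForm_mem_TD hc hcφ hvφ)
  have himp : ∀ a b : Fin 3, a ≠ 0 → b ≠ 0 → (b = 2 → a = 2) → fimp a b ≠ 0 := by decide
  exact himp _ _ hvφ (evalD_ne_zero_of_substP_switchForm_mem_TD hc hψ)
    (evalD_eq_two_of_vars_substP_switchForm_subset hvars)

/-- if some substitution instance of `φ` lies in T_D, then
φ → ψ ∈ Cn_0(R_{0*}, T_D) iff every substitution `e` with h^e(φ) ∈ T_D also has
h^e(ψ) ∈ T_D and P_0(h^e(φ)) ⊆ P_0(h^e(ψ)). -/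
theorem imp_mem_Cn0star_TD_iff (φ ψ : PropForm)
    (hex : ∃ e : ℕ → PropForm, substP e φ ∈ TD) :
    Cn0star TD (.imp φ ψ) ↔
      ∀ e : ℕ → PropForm, substP e φ ∈ TD →
        substP e ψ ∈ TD ∧ (substP e φ).vars ⊆ (substP e ψ).vars := by
  refine ⟨fun h e hφ => ?_, fun h => .base (imp_mem_TD_of_forall_substP hex h)⟩
  have himp : imp (substP e φ) (substP e ψ) ∈ TD := mem_TD_of_Cn0star subset_rfl (h.subst e)
  exact ⟨TD_mp himp hφ, vars_subset_of_imp_mem_TD himp hφ⟩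
end

section
/- Let φ be a formula of the first-order language of arithmetic (with predicate symbols = and <) that is valid in every nonempty structure. If the predicate symbol < does not occur in φ, or if the predicate symbol = does not occur in φ, then i(φ) ∈ T_D, where i collapses all equality atoms to the propositional variable p, all order atoms to the propositional variable s, and erases quantifiers. -/
/-- Terms of the first-order language of arithmetic: individual variables, the
constant 1, and the binary function symbols + and ·. -/
inductive ATm : Type
  | var : ℕ → ATm
  | one : ATm
  | add : ATm → ATm → ATm
  | mul : ATm → ATm → ATm

/-- S_A : formulas of the first-order language of arithmetic, with binary predicate
symbols = and <, built using →, ∼, ∨, ∧, ≡ and quantifiers. -/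
inductive AFm : Type
  | eq : ATm → ATm → AFm
  | lt : ATm → ATm → AFm
  | neg : AFm → AFm
  | imp : AFm → AFm → AFm
  | disj : AFm → AFm → AFm
  | conj : AFm → AFm → AFm
  | equiv : AFm → AFm → AFm
  | all : ℕ → AFm → AFm
  | ex : ℕ → AFm → AFm

/-- A (nonempty) structure for the language of arithmetic: the predicate symbols
= and < and the symbols 1, +, · are interpreted arbitrarily. -/
structure AStr : Type 1 where
  M : Type
  ne : Nonempty M
  one : M
  add : M → M → M
  mul : M → M → M
  eqI : M → M → Prop
  ltI : M → M → Prop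

/-- Value of an arithmetic term in a structure under an assignment. -/
def ATm.eval (S : AStr) (v : ℕ → S.M) : ATm → S.M
  | .var x => v x
  | .one => S.one
  | .add t u => S.add (t.eval S v) (u.eval S v)
  | .mul t u => S.mul (t.eval S v) (u.eval S v)

/-- Satisfaction of an arithmetic formula in a structure under an assignment. -/
def ASat (S : AStr) (v : ℕ → S.M) : AFm → Prop
  | .eq t u => S.eqI (t.eval S v) (u.eval S v)
  | .lt t u => S.ltI (t.eval S v) (u.eval S v)
  | .neg φ => ¬ ASat S v φ
  | .imp φ ψ => ASat S v φ → ASat S v ψ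
  | .disj φ ψ => ASat S v φ ∨ ASat S v ψ
  | .conj φ ψ => ASat S v φ ∧ ASat S v ψ
  | .equiv φ ψ => (ASat S v φ ↔ ASat S v ψ)
  | .all x φ => ∀ a : S.M, ASat S (Function.update v x a) φ
  | .ex x φ => ∃ a : S.M, ASat S (Function.update v x a) φ

/-- L_2^r : the set of formulas of S_A valid in every nonempty structure
(the logical axioms of the arithmetic system). -/
def AL2 : Set AFm := {φ | ∀ (S : AStr) (v : ℕ → S.M), ASat S v φ}

/-- The map i : S_A → S_0 collapsing every equality atom to the propositional
variable `p`, every order atom to the propositional variable `s`, commuting with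
all connectives and erasing quantifiers. -/
def imap (p s : ℕ) : AFm → PropForm
  | .eq _ _ => .var p
  | .lt _ _ => .var s
  | .neg φ => .neg (imap p s φ)
  | .imp φ ψ => .imp (imap p s φ) (imap p s ψ)
  | .disj φ ψ => .disj (imap p s φ) (imap p s ψ)
  | .conj φ ψ => .conj (imap p s φ) (imap p s ψ)
  | .equiv φ ψ => .equiv (imap p s φ) (imap p s ψ)
  | .all _ φ => imap p s φ
  | .ex _ φ => imap p s φ
/-- The predicate symbol = occurs in the formula. -/
def AFm.hasEq : AFm → Prop
  | .eq _ _ => True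
  | .lt _ _ => False
  | .neg φ => φ.hasEq
  | .imp φ ψ => φ.hasEq ∨ ψ.hasEq
  | .disj φ ψ => φ.hasEq ∨ ψ.hasEq
  | .conj φ ψ => φ.hasEq ∨ ψ.hasEq
  | .equiv φ ψ => φ.hasEq ∨ ψ.hasEq
  | .all _ φ => φ.hasEq
  | .ex _ φ => φ.hasEq

/-- The predicate symbol < occurs in the formula. -/
def AFm.hasLt : AFm → Prop
  | .eq _ _ => False
  | .lt _ _ => True
  | .neg φ => φ.hasLt
  | .imp φ ψ => φ.hasLt ∨ ψ.hasLt
  | .disj φ ψ => φ.hasLt ∨ ψ.hasLt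
  | .conj φ ψ => φ.hasLt ∨ ψ.hasLt
  | .equiv φ ψ => φ.hasLt ∨ ψ.hasLt
  | .all _ φ => φ.hasLt
  | .ex _ φ => φ.hasLt

/-!
The values `{0, 1}` of 𝔐_D form a copy of the two-element Boolean algebra and `{2}` is a
subalgebra. In the one-element structure where every atom has truth value `a`, quantifiers are
idle, so the truth value of φ is the Boolean value of `i(φ)` under the constant valuation `a`;
for valid φ this is `1`, while the constant valuation `2` gives `2`. If only one predicate symbol
occurs in φ, then `i(φ)` has a single variable, so every valuation acts as a constant one.
-/

theorem evalD_const_two (φ : PropForm) : evalD (fun _ => 2) φ = 2 := by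
  induction φ <;> simp only [evalD, *] <;> rfl

theorem evalD_imap_congr_of_not_hasLt {p s : ℕ} {v w : ℕ → Fin 3} {φ : AFm}
    (hvw : v p = w p) (hLt : ¬ φ.hasLt) : evalD v (imap p s φ) = evalD w (imap p s φ) := by
  induction φ <;> simp_all [imap, evalD, AFm.hasLt]

theorem evalD_imap_congr_of_not_hasEq {p s : ℕ} {v w : ℕ → Fin 3} {φ : AFm}
    (hvw : v s = w s) (hEq : ¬ φ.hasEq) : evalD v (imap p s φ) = evalD w (imap p s φ) := by
  induction φ <;> simp_all [imap, evalD, AFm.hasEq]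

open Classical in
noncomputable def boolVal (a : Prop) : Fin 3 := if a then 1 else 0

theorem fneg_boolVal (a : Prop) : fneg (boolVal a) = boolVal (¬ a) := by
  by_cases a <;> simp [boolVal, *] <;> rfl

theorem fimp_boolVal (a b : Prop) : fimp (boolVal a) (boolVal b) = boolVal (a → b) := by
  by_cases a <;> by_cases b <;> simp [boolVal, *] <;> rfl

theorem fdisj_boolVal (a b : Prop) : fdisj (boolVal a) (boolVal b) = boolVal (a ∨ b) := by
  by_cases a <;> by_cases b <;> simp [boolVal, *] <;> rfl

theorem fconj_boolVal (a b : Prop) : fconj (boolVal a) (boolVal b) = boolVal (a ∧ b) := by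
  by_cases a <;> by_cases b <;> simp [boolVal, *] <;> rfl

theorem fequiv_boolVal (a b : Prop) : fequiv (boolVal a) (boolVal b) = boolVal (a ↔ b) := by
  by_cases a <;> by_cases b <;> simp [boolVal, *] <;> rfl

abbrev AStr.onePoint (a : Prop) : AStr where
  M := Unit
  ne := ⟨()⟩
  one := ()
  add _ _ := ()
  mul _ _ := ()
  eqI _ _ := a
  ltI _ _ := a

theorem evalD_const_boolVal_imap (p s : ℕ) (a : Prop) (φ : AFm) :
    evalD (fun _ => boolVal a) (imap p s φ) = boolVal (ASat (.onePoint a) (fun _ => ()) φ) := by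
  induction φ <;>
    simp [imap, evalD, ASat, fneg_boolVal, fimp_boolVal, fdisj_boolVal,
      fconj_boolVal, fequiv_boolVal, *]

theorem evalD_const_imap_of_mem_AL2 (p s : ℕ) {φ : AFm} (hφ : φ ∈ AL2) (c : Fin 3) :
    evalD (fun _ => c) (imap p s φ) = 1 ∨ evalD (fun _ => c) (imap p s φ) = 2 := by
  have hvalid (a : Prop) : evalD (fun _ => boolVal a) (imap p s φ) = 1 := by
    rw [evalD_const_boolVal_imap, boolVal, if_pos (hφ _ _)]
  fin_cases c
  · exact .inl (by simpa [boolVal] using hvalid False)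
  · exact .inl (by simpa [boolVal] using hvalid True)
  · exact .inr (evalD_const_two _)

theorem imap_mem_TD_of_single_predicate_general (p s : ℕ)
    (φ : AFm) (hφ : φ ∈ AL2) (h : ¬ φ.hasLt ∨ ¬ φ.hasEq) :
    imap p s φ ∈ TD := by
  intro v
  rcases h with hLt | hEq
  · rw [evalD_imap_congr_of_not_hasLt (w := fun _ => v p) rfl hLt]
    exact evalD_const_imap_of_mem_AL2 p s hφ (v p)
  · rw [evalD_imap_congr_of_not_hasEq (w := fun _ => v s) rfl hEq]
    exact evalD_const_imap_of_mem_AL2 p s hφ (v s)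

/-- if φ is a formula of the language of arithmetic valid in every
nonempty structure and the predicate symbol < does not occur in φ, or the predicate
symbol = does not occur in φ, then i(φ) ∈ T_D (where p and s are two fixed distinct
propositional variables). -/
theorem imap_mem_TD_of_single_predicate (p s : ℕ) (hps : p ≠ s)
    (φ : AFm) (hφ : φ ∈ AL2) (h : ¬ φ.hasLt ∨ ¬ φ.hasEq) :
    imap p s φ ∈ TD :=
  imap_mem_TD_of_single_predicate_general p s φ hφ h
end

section
/- Let α be any formula of the first-order language of arithmetic (with predicate symbols = and <) that is valid in every nonempty structure, and let ψ^12 be the formula ∧x1∧x2[x1 < x2 ≡ ∨x3(x1 + x3 = x2)]. Then i(ψ^12 → α) ∈ T_D, i.e. the propositional formula (s ≡ p) → i(α) is valid in the matrix 𝔐_D. -/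
/-- ψ^12 : the formula ∧x1∧x2[x1 < x2 ≡ ∨x3(x1 + x3 = x2)]. -/
def psi12 : AFm :=
  .all 1 (.all 2 (.equiv (.lt (.var 1) (.var 2))
    (.ex 3 (.eq (.add (.var 1) (.var 3)) (.var 2)))))

/-!
If `v s ≠ v p`, the antecedent `s ≡ p` takes the value `0`, so the implication takes `1`.
If `v s = v p = 2`, every formula in `p` and `s` takes the value `2`, because `{2}` is closed
under all operations of `𝔐_D`, and `2 → 2 = 2`. If `v s = v p ∈ {0, 1}`, then on `{0, 1}` the
matrix computes classical truth values, so `i(α)` is evaluated exactly as `α` in the one-element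
structure interpreting `=` by `v p = 1` and `<` by `v s = 1`; validity of `α` gives `i(α)` the
value `1`, and `x → 1 = 1` for every `x`.
-/

theorem fimp_zero_left (x : Fin 3) : fimp 0 x = 1 := by
  fin_cases x <;> rfl

theorem fimp_one_right (x : Fin 3) : fimp x 1 = 1 := by
  fin_cases x <;> rfl

theorem fequiv_eq_zero_of_ne {x y : Fin 3} (h : x ≠ y) : fequiv x y = 0 := by
  fin_cases x <;> fin_cases y <;> simp_all <;> rfl

theorem evalD_imap_eq_two {p s : ℕ} {v : ℕ → Fin 3} (hp : v p = 2) (hs : v s = 2)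
    (φ : AFm) : evalD v (imap p s φ) = 2 := by
  induction φ with
  | eq => exact hp
  | lt => exact hs
  | neg φ ih => simp only [imap, evalD, ih]; rfl
  | imp φ ψ ih₁ ih₂ | disj φ ψ ih₁ ih₂ | conj φ ψ ih₁ ih₂ | equiv φ ψ ih₁ ih₂ =>
    simp only [imap, evalD, ih₁, ih₂]; rfl
  | all x φ ih | ex x φ ih => exact ih

noncomputable def propVal (P : Prop) : Fin 3 := by
  classical exact if P then 1 else 0

section BooleanFragment

variable {P Q : Prop}

theorem eq_propVal_of_ne_two {x : Fin 3} (hx : x ≠ 2) : x = propVal (x = 1) := by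
  fin_cases x <;> simp_all [propVal]

theorem fneg_propVal : fneg (propVal P) = propVal ¬P := by
  by_cases hP : P <;> simp [propVal, hP] <;> rfl

theorem fimp_propVal : fimp (propVal P) (propVal Q) = propVal (P → Q) := by
  by_cases hP : P <;> by_cases hQ : Q <;> simp [propVal, hP, hQ] <;> rfl

theorem fdisj_propVal : fdisj (propVal P) (propVal Q) = propVal (P ∨ Q) := by
  by_cases hP : P <;> by_cases hQ : Q <;> simp [propVal, hP, hQ] <;> rfl

theorem fconj_propVal : fconj (propVal P) (propVal Q) = propVal (P ∧ Q) := by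
  by_cases hP : P <;> by_cases hQ : Q <;> simp [propVal, hP, hQ] <;> rfl

theorem fequiv_propVal : fequiv (propVal P) (propVal Q) = propVal (P ↔ Q) := by
  by_cases hP : P <;> by_cases hQ : Q <;> simp [propVal, hP, hQ] <;> rfl

end BooleanFragment

def AStr.point (e l : Prop) : AStr :=
  ⟨PUnit, ⟨⟨⟩⟩, ⟨⟩, fun _ _ => ⟨⟩, fun _ _ => ⟨⟩, fun _ _ => e, fun _ _ => l⟩

theorem evalD_imap_eq_propVal {p s : ℕ} {v : ℕ → Fin 3} {e l : Prop}
    (hp : v p = propVal e) (hs : v s = propVal l) (φ : AFm) (w : ℕ → PUnit) :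
    evalD v (imap p s φ) = propVal (ASat (AStr.point e l) w φ) := by
  induction φ generalizing w with
  | eq => exact hp
  | lt => exact hs
  | neg φ ih => rw [imap, evalD, ih w, fneg_propVal]; rfl
  | imp φ ψ ih₁ ih₂ => rw [imap, evalD, ih₁ w, ih₂ w, fimp_propVal]; rfl
  | disj φ ψ ih₁ ih₂ => rw [imap, evalD, ih₁ w, ih₂ w, fdisj_propVal]; rfl
  | conj φ ψ ih₁ ih₂ => rw [imap, evalD, ih₁ w, ih₂ w, fconj_propVal]; rfl
  | equiv φ ψ ih₁ ih₂ => rw [imap, evalD, ih₁ w, ih₂ w, fequiv_propVal]; rfl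
  | all x φ ih =>
    rw [imap, ih (Function.update w x ⟨⟩)]
    exact congrArg propVal (propext ⟨fun h _ => h, fun h => h ⟨⟩⟩)
  | ex x φ ih =>
    rw [imap, ih (Function.update w x ⟨⟩)]
    exact congrArg propVal (propext ⟨fun h => ⟨⟨⟩, h⟩, fun ⟨_, h⟩ => h⟩)

theorem evalD_imap_eq_one_of_mem_AL2 {p s : ℕ} {v : ℕ → Fin 3} (hp : v p ≠ 2) (hs : v s ≠ 2)
    {α : AFm} (hα : α ∈ AL2) : evalD v (imap p s α) = 1 := by
  rw [evalD_imap_eq_propVal (eq_propVal_of_ne_two hp) (eq_propVal_of_ne_two hs) α (fun _ => ⟨⟩)]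
  exact if_pos (hα _ _)

theorem imap_psi12_imp_mem_TD_general (p s : ℕ)
    (α : AFm) (hα : α ∈ AL2) :
    imap p s (.imp psi12 α) ∈ TD := by
  intro v
  simp only [imap, psi12, evalD]
  by_cases hsp : v s = v p
  · by_cases h2 : v p = 2
    · rw [hsp, h2, evalD_imap_eq_two h2 (hsp.trans h2)]
      exact Or.inr rfl
    · exact Or.inl (by rw [evalD_imap_eq_one_of_mem_AL2 h2 (hsp ▸ h2) hα, fimp_one_right])
  · exact Or.inl (by rw [fequiv_eq_zero_of_ne hsp, fimp_zero_left])

/-- for every formula α of the language of arithmetic valid in every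
nonempty structure, i(ψ^12 → α) ∈ T_D, i.e. the propositional formula
(s ≡ p) → i(α) is valid in the matrix 𝔐_D (where p and s are two fixed distinct
propositional variables). -/
theorem imap_psi12_imp_mem_TD (p s : ℕ) (hps : p ≠ s)
    (α : AFm) (hα : α ∈ AL2) :
    imap p s (.imp psi12 α) ∈ TD :=
  imap_psi12_imp_mem_TD_general p s α hα
end

section
/- The arithmetic system based on the restricted logical axioms derives exactly the same theorems as the arithmetic system based on all classical logical axioms: Cn(R_{0+}^P, L_D^r ∪ X_r) = Cn(R_{0+}^P, L_2^r ∪ X_r), where X_r = X_P ∪ Y_P. -/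
/-- Substitution of the term `t` for the free occurrences of the variable `x`
in an arithmetic term. -/
def ATm.substV (x : ℕ) (t : ATm) : ATm → ATm
  | .var y => if y = x then t else .var y
  | .one => .one
  | .add u w => .add (ATm.substV x t u) (ATm.substV x t w)
  | .mul u w => .mul (ATm.substV x t u) (ATm.substV x t w)

/-- Substitution of the term `t` for the free occurrences of the variable `x`
in an arithmetic formula. -/
def AFm.substV (x : ℕ) (t : ATm) : AFm → AFm
  | .eq u w => .eq (ATm.substV x t u) (ATm.substV x t w)
  | .lt u w => .lt (ATm.substV x t u) (ATm.substV x t w)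
  | .neg φ => .neg (AFm.substV x t φ)
  | .imp φ ψ => .imp (AFm.substV x t φ) (AFm.substV x t ψ)
  | .disj φ ψ => .disj (AFm.substV x t φ) (AFm.substV x t ψ)
  | .conj φ ψ => .conj (AFm.substV x t φ) (AFm.substV x t ψ)
  | .equiv φ ψ => .equiv (AFm.substV x t φ) (AFm.substV x t ψ)
  | .all y φ => if y = x then .all y φ else .all y (AFm.substV x t φ)
  | .ex y φ => if y = x then .ex y φ else .ex y (AFm.substV x t φ)

/-- ψ^1 : ∧x1 (x1 = x1). -/
def psi1 : AFm := .all 1 (.eq (.var 1) (.var 1))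

/-- ψ^2 : ∧x1∧x2 (x1 = x2 → x2 = x1). -/
def psi2 : AFm := .all 1 (.all 2 (.imp (.eq (.var 1) (.var 2)) (.eq (.var 2) (.var 1))))

/-- ψ^3 : ∧x1∧x2∧x3 (x1 = x2 → (x2 = x3 → x1 = x3)). -/
def psi3 : AFm := .all 1 (.all 2 (.all 3 (.imp (.eq (.var 1) (.var 2))
  (.imp (.eq (.var 2) (.var 3)) (.eq (.var 1) (.var 3))))))

/-- ψ^4 : ∧x1∧x2∧x3∧x4 (x1 = x2 → (x3 = x4 → x1 + x3 = x2 + x4)). -/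
def psi4 : AFm := .all 1 (.all 2 (.all 3 (.all 4 (.imp (.eq (.var 1) (.var 2))
  (.imp (.eq (.var 3) (.var 4))
    (.eq (.add (.var 1) (.var 3)) (.add (.var 2) (.var 4))))))))

/-- ψ^5 : ∧x1∧x2∧x3∧x4 (x1 = x2 → (x3 = x4 → x1 · x3 = x2 · x4)). -/
def psi5 : AFm := .all 1 (.all 2 (.all 3 (.all 4 (.imp (.eq (.var 1) (.var 2))
  (.imp (.eq (.var 3) (.var 4))
    (.eq (.mul (.var 1) (.var 3)) (.mul (.var 2) (.var 4))))))))

/-- ψ^6 : ∧x1∧x2∧x3∧x4 (x1 = x2 → (x3 = x4 → (x1 < x3 → x2 < x4))). -/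
def psi6 : AFm := .all 1 (.all 2 (.all 3 (.all 4 (.imp (.eq (.var 1) (.var 2))
  (.imp (.eq (.var 3) (.var 4))
    (.imp (.lt (.var 1) (.var 3)) (.lt (.var 2) (.var 4))))))))

/-- ψ^7 : ∧x1 ∼(1 = x1 + 1). -/
def psi7 : AFm := .all 1 (.neg (.eq .one (.add (.var 1) .one)))

/-- ψ^8 : ∧x1∧x2 (x1 + 1 = x2 + 1 → x1 = x2). -/
def psi8 : AFm := .all 1 (.all 2 (.imp
  (.eq (.add (.var 1) .one) (.add (.var 2) .one)) (.eq (.var 1) (.var 2))))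

/-- ψ^9 : ∧x1∧x2 (x1 + (x2 + 1) = (x1 + x2) + 1). -/
def psi9 : AFm := .all 1 (.all 2 (.eq (.add (.var 1) (.add (.var 2) .one))
  (.add (.add (.var 1) (.var 2)) .one)))

/-- ψ^10 : ∧x1 (x1 · 1 = x1). -/
def psi10 : AFm := .all 1 (.eq (.mul (.var 1) .one) (.var 1))

/-- ψ^11 : ∧x1∧x2 (x1 · (x2 + 1) = (x1 · x2) + x1). -/
def psi11 : AFm := .all 1 (.all 2 (.eq (.mul (.var 1) (.add (.var 2) .one))
  (.add (.mul (.var 1) (.var 2)) (.var 1))))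

/-- X_P : the set of the twelve specific arithmetic axioms ψ^1, …, ψ^12. -/
def XP : Set AFm :=
  {psi1, psi2, psi3, psi4, psi5, psi6, psi7, psi8, psi9, psi10, psi11, psi12}

/-- Y_P : the set of all induction axioms
(A(1) ∧ ∧x1(A(x1) → A(x1 + 1))) → ∧x1 A(x1), for A(x1) ∈ S_A. -/
def YP : Set AFm :=
  {φ | ∃ A : AFm, φ = .imp
    (.conj (A.substV 1 .one)
      (.all 1 (.imp A (A.substV 1 (.add (.var 1) .one)))))
    (.all 1 A)}

/-- Cn(R_{0+}^P, X) : the smallest subset of S_A containing `X` and closed under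
modus ponens (r_0^P) and generalization (r_+^P). -/
inductive CnA (X : Set AFm) : AFm → Prop
  | base {φ : AFm} : φ ∈ X → CnA X φ
  | mp {φ ψ : AFm} : CnA X (.imp φ ψ) → CnA X φ → CnA X ψ
  | gen {φ : AFm} (x : ℕ) : CnA X φ → CnA X (.all x φ)

/-- L_D^r : the set of logical axioms φ ∈ L_2^r with i(φ) ∈ T_D. -/
def LDr (p s : ℕ) : Set AFm := {φ ∈ AL2 | imap p s φ ∈ TD}

lemma CnA_mono {X Y : Set AFm} (h : X ⊆ Y) {φ : AFm} (hφ : CnA X φ) : CnA Y φ := by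
  induction hφ with
  | base h' => exact .base (h h')
  | mp _ _ ih1 ih2 => exact .mp ih1 ih2
  | gen x _ ih => exact .gen x ih

lemma fin3_cases (a : Fin 3) : a = 0 ∨ a = 1 ∨ a = 2 :=
  (by decide : ∀ b : Fin 3, b = 0 ∨ b = 1 ∨ b = 2) a

lemma eval_two (p s : ℕ) (v : ℕ → Fin 3) (hp : v p = 2) (hs : v s = 2) (φ : AFm) :
    evalD v (imap p s φ) = 2 := by
  induction φ with
  | eq t u => simpa [imap, evalD]
  | lt t u => simpa [imap, evalD]
  | neg φ ih => simp [imap, evalD, ih]; decide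
  | imp φ ψ ih1 ih2 => simp [imap, evalD, ih1, ih2]; decide
  | disj φ ψ ih1 ih2 => simp [imap, evalD, ih1, ih2]; decide
  | conj φ ψ ih1 ih2 => simp [imap, evalD, ih1, ih2]; decide
  | equiv φ ψ ih1 ih2 => simp [imap, evalD, ih1, ih2]; decide
  | all x φ ih => simpa [imap] using ih
  | ex x φ ih => simpa [imap] using ih

/-- A one-element structure realizing given truth values for `=` and `<`. -/
def S0 (P Q : Prop) : AStr :=
  ⟨PUnit, ⟨⟨⟩⟩, ⟨⟩, fun _ _ => ⟨⟩, fun _ _ => ⟨⟩, fun _ _ => P, fun _ _ => Q⟩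

open Classical in
lemma eval_classical (p s : ℕ) (v : ℕ → Fin 3) (hp : v p ≠ 2) (hs : v s ≠ 2)
    (φ : AFm) (u : ℕ → (S0 (v p = 1) (v s = 1)).M) :
    evalD v (imap p s φ) =
      if ASat (S0 (v p = 1) (v s = 1)) u φ then 1 else 0 := by
  classical
  induction φ generalizing u with
  | eq t t' =>
    rcases fin3_cases (v p) with h | h | h
    · simp [imap, evalD, ASat, S0, h]
    · simp [imap, evalD, ASat, S0, h]
    · exact absurd h hp
  | lt t t' =>
    rcases fin3_cases (v s) with h | h | h
    · simp [imap, evalD, ASat, S0, h]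
    · simp [imap, evalD, ASat, S0, h]
    · exact absurd h hs
  | neg φ ih =>
    by_cases h : ASat (S0 (v p = 1) (v s = 1)) u φ <;>
      simp [imap, evalD, ih u, ASat, h] <;> decide
  | imp φ ψ ih1 ih2 =>
    by_cases h1 : ASat (S0 (v p = 1) (v s = 1)) u φ <;>
    by_cases h2 : ASat (S0 (v p = 1) (v s = 1)) u ψ <;>
      simp [imap, evalD, ih1 u, ih2 u, ASat, h1, h2] <;> decide
  | disj φ ψ ih1 ih2 =>
    by_cases h1 : ASat (S0 (v p = 1) (v s = 1)) u φ <;>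
    by_cases h2 : ASat (S0 (v p = 1) (v s = 1)) u ψ <;>
      simp [imap, evalD, ih1 u, ih2 u, ASat, h1, h2] <;> decide
  | conj φ ψ ih1 ih2 =>
    by_cases h1 : ASat (S0 (v p = 1) (v s = 1)) u φ <;>
    by_cases h2 : ASat (S0 (v p = 1) (v s = 1)) u ψ <;>
      simp [imap, evalD, ih1 u, ih2 u, ASat, h1, h2] <;> decide
  | equiv φ ψ ih1 ih2 =>
    by_cases h1 : ASat (S0 (v p = 1) (v s = 1)) u φ <;>
    by_cases h2 : ASat (S0 (v p = 1) (v s = 1)) u ψ <;>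
      simp [imap, evalD, ih1 u, ih2 u, ASat, h1, h2] <;> decide
  | all x φ ih =>
    have hup : ∀ a, Function.update u x a = u := fun a => funext fun y => @Subsingleton.elim PUnit _ _ _
    simp only [imap, ASat]
    rw [ih u]
    congr 1
    simp only [hup]
    exact propext ⟨fun h _ => h, fun h => h ⟨⟩⟩
  | ex x φ ih =>
    have hup : ∀ a, Function.update u x a = u := fun a => funext fun y => @Subsingleton.elim PUnit _ _ _
    simp only [imap, ASat]
    rw [ih u]
    congr 1
    simp only [hup]
    exact propext ⟨fun h => ⟨⟨⟩, h⟩, fun ⟨_, h⟩ => h⟩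

lemma imp_psi12_mem_LDr (p s : ℕ) {φ : AFm} (hφ : φ ∈ AL2) :
    AFm.imp psi12 φ ∈ LDr p s := by
  classical
  refine ⟨fun S v _ => hφ S v, fun v => ?_⟩
  have himg : imap p s (AFm.imp psi12 φ) =
      .imp (.equiv (.var s) (.var p)) (imap p s φ) := rfl
  rw [himg]
  have hclassical : ∀ (hp : v p ≠ 2) (hs : v s ≠ 2),
      fimp (fequiv (v s) (v p)) (evalD v (imap p s φ)) = 1 ∨
      fimp (fequiv (v s) (v p)) (evalD v (imap p s φ)) = 2 := by
    intro hp hs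
    have hb : evalD v (imap p s φ) = 1 := by
      rw [eval_classical p s v hp hs φ (fun _ => ⟨⟩)]
      simp [hφ (S0 (v p = 1) (v s = 1)) (fun _ => ⟨⟩)]
    rw [hb]
    exact (by decide : ∀ a b : Fin 3, fimp (fequiv a b) 1 = 1 ∨ fimp (fequiv a b) 1 = 2)
      (v s) (v p)
  have hzero : ∀ (h0 : fequiv (v s) (v p) = 0),
      fimp (fequiv (v s) (v p)) (evalD v (imap p s φ)) = 1 ∨
      fimp (fequiv (v s) (v p)) (evalD v (imap p s φ)) = 2 := by
    intro h0
    rw [h0]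
    exact (by decide : ∀ b : Fin 3, fimp 0 b = 1 ∨ fimp 0 b = 2) _
  show fimp (fequiv (v s) (v p)) (evalD v (imap p s φ)) = 1 ∨
      fimp (fequiv (v s) (v p)) (evalD v (imap p s φ)) = 2
  rcases fin3_cases (v p) with hp | hp | hp <;> rcases fin3_cases (v s) with hs | hs | hs
  · exact hclassical (by rw [hp]; decide) (by rw [hs]; decide)
  · exact hclassical (by rw [hp]; decide) (by rw [hs]; decide)
  · exact hzero (by rw [hp, hs]; decide)
  · exact hclassical (by rw [hp]; decide) (by rw [hs]; decide)
  · exact hclassical (by rw [hp]; decide) (by rw [hs]; decide)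
  · exact hzero (by rw [hp, hs]; decide)
  · exact hzero (by rw [hp, hs]; decide)
  · exact hzero (by rw [hp, hs]; decide)
  · right
    have hb := eval_two p s v hp hs φ
    rw [hb, hp, hs]
    decide

lemma psi12_mem_XP : psi12 ∈ XP := by
  simp [XP]

/-- the arithmetic system based on the restricted logical axioms L_D^r
derives exactly the same theorems as the arithmetic system based on all classical
logical axioms L_2^r :
Cn(R_{0+}^P, L_D^r ∪ X_r) = Cn(R_{0+}^P, L_2^r ∪ X_r), where X_r = X_P ∪ Y_P
(and p, s are two fixed distinct propositional variables). -/
theorem CnA_LDr_eq_CnA_AL2 (p s : ℕ) (hps : p ≠ s) :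
    {φ : AFm | CnA (LDr p s ∪ (XP ∪ YP)) φ} =
      {φ : AFm | CnA (AL2 ∪ (XP ∪ YP)) φ} := by
  ext φ
  simp only [Set.mem_setOf_eq]
  constructor
  · refine CnA_mono ?_
    rintro ψ (h | h)
    · exact Or.inl h.1
    · exact Or.inr h
  · intro h
    induction h with
    | base h' =>
      rcases h' with h' | h'
      · exact .mp (.base (Or.inl (imp_psi12_mem_LDr p s h')))
          (.base (Or.inr (Or.inl psi12_mem_XP)))
      · exact .base (Or.inr h')
    | mp _ _ ih1 ih2 => exact .mp ih1 ih2
    | gen x _ ih => exact .gen x ih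
end
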